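/- arXiv:2012.10969 — 11 statements merged into one kernel-verified Lean document; each statement's English description precedes it below -/
import Mathlib

section
/- Let G be a graph with n vertices, λ an eigenvalue of G of multiplicity k > 0, and X ⊂ V(G) a subset. Then X is a λ-star set of G (i.e., the projections P e_j for j ∈ X of the standard basis vectors onto the eigenspace E_G(λ) form a basis of E_G(λ)) if and only if |X| = k and λ is not an eigenvalue of the induced subgraph G − X. -/
open Matrix

noncomputable def eigSpace {m : Type*} [Fintype m] [DecidableEq m]
    (A : Matrix m m ℝ) (lam : ℝ) : Submodule ℝ (m → ℝ) :=
  LinearMap.ker (Matrix.mulVecLin (A - lam • (1 : Matrix m m ℝ)))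

/-- `lam` is an eigenvalue of the real matrix `A`. -/
def IsEig {m : Type*} [Fintype m] [DecidableEq m] (A : Matrix m m ℝ) (lam : ℝ) : Prop :=
  eigSpace A lam ≠ ⊥

/-- The multiplicity of `lam` as an eigenvalue of `A`. -/
noncomputable def multE {m : Type*} [Fintype m] [DecidableEq m]
    (A : Matrix m m ℝ) (lam : ℝ) : ℕ :=
  Module.finrank ℝ (eigSpace A lam)

/-- `lam` is a main eigenvalue of `A`: its eigenspace is not orthogonal to the all-ones
vector. -/
def IsMainEig {m : Type*} [Fintype m] [DecidableEq m] (A : Matrix m m ℝ) (lam : ℝ) : Prop :=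
  ∃ x ∈ eigSpace A lam, ∑ i, x i ≠ 0

/-- The adjacency matrix of the subgraph of `G` induced by the vertex set `S`. -/
def indMatrix {n : ℕ} (G : SimpleGraph (Fin n)) [DecidableRel G.Adj] (S : Finset (Fin n)) :
    Matrix S S ℝ :=
  (G.adjMatrix ℝ).submatrix (fun i => (i : Fin n)) (fun j => (j : Fin n))

/-- `X` is a `lam`-star set of `G`: its cardinality equals the multiplicity of `lam`
and `lam` is not an eigenvalue of the subgraph induced by the complement of `X`. -/
def IsStarSet {n : ℕ} (G : SimpleGraph (Fin n)) [DecidableRel G.Adj] (lam : ℝ)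
    (X : Finset (Fin n)) : Prop :=
  X.card = multE (G.adjMatrix ℝ) lam ∧ ¬ IsEig (indMatrix G Xᶜ) lam

/-- The block `N` of the adjacency matrix: rows indexed by `Xᶜ`, columns by `X`. -/
def Nmat {n : ℕ} (G : SimpleGraph (Fin n)) [DecidableRel G.Adj] (X : Finset (Fin n)) :
    Matrix ↥(Xᶜ) ↥X ℝ :=
  (G.adjMatrix ℝ).submatrix (fun i => (i : Fin n)) (fun j => (j : Fin n))

/-- The block `C` of the adjacency matrix: the adjacency matrix of `G - X`. -/
def Cmat {n : ℕ} (G : SimpleGraph (Fin n)) [DecidableRel G.Adj] (X : Finset (Fin n)) :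
    Matrix ↥(Xᶜ) ↥(Xᶜ) ℝ :=
  indMatrix G Xᶜ

/-- The eigenspace of lam, viewed inside Euclidean space (so that the orthogonal
projection onto it is available). -/
noncomputable def eigSpaceE {n : ℕ} (A : Matrix (Fin n) (Fin n) ℝ) (lam : ℝ) :
    Submodule ℝ (EuclideanSpace ℝ (Fin n)) :=
  LinearMap.ker (Matrix.toEuclideanLin (A - lam • (1 : Matrix (Fin n) (Fin n) ℝ)))

/-!
For `y` in the eigenspace `E = ker T`, `T = A - λ I`, we have `⟪P e_j, y⟫ = y_j`; so the `P e_j`,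
`j ∈ X`, span `E` iff `E ∩ W = 0`, where `W` is the space of vectors vanishing on `X`, and they form
a basis iff moreover `|X| = k`. In that case `E ⊕ W = ℝⁿ`, and as `T` is symmetric its range is
`E^⊥`: if `w ∈ W` and `T w` is supported on `X`, then `T w ∈ E^⊥ ∩ W^⊥ = (E + W)^⊥ = 0`, so
`w ∈ E ∩ W = 0`.
Identifying `W` with functions on `V ∖ X`, the map `w ↦ (T w)|_{V ∖ X}` is `A_{G - X} - λ I`, so
this says exactly that `λ` is not an eigenvalue of `G - X`.
-/

open Module Submodule

theorem Submodule.mem_orthogonal_span_range_iff {𝕜 E ι : Type*} [RCLike 𝕜]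
    [NormedAddCommGroup E] [InnerProductSpace 𝕜 E] {v : ι → E} {y : E} :
    y ∈ (span 𝕜 (Set.range v))ᗮ ↔ ∀ i, inner 𝕜 (v i) y = 0 := by
  refine ⟨fun h i => inner_right_of_mem_orthogonal (subset_span (Set.mem_range_self i)) h,
    fun h => ?_⟩
  have hle : span 𝕜 (Set.range v) ≤ (𝕜 ∙ y)ᗮ := by
    rw [span_le]
    rintro _ ⟨i, rfl⟩
    exact mem_orthogonal_singleton_iff_inner_left.mpr (h i)
  exact (mem_orthogonal _ _).mpr fun u hu => mem_orthogonal_singleton_iff_inner_left.mp (hle hu)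

theorem Submodule.span_orthogonalProjectionOnto_eq_top_iff {𝕜 E ι : Type*} [RCLike 𝕜]
    [NormedAddCommGroup E] [InnerProductSpace 𝕜 E] [FiniteDimensional 𝕜 E]
    (K : Submodule 𝕜 E) (v : ι → E) :
    span 𝕜 (Set.range fun i => K.orthogonalProjectionOnto (v i)) = ⊤ ↔
      K ⊓ (span 𝕜 (Set.range v))ᗮ = ⊥ := by
  have key (y : K) : y ∈ (span 𝕜 (Set.range fun i => K.orthogonalProjectionOnto (v i)))ᗮ ↔
      (y : E) ∈ (span 𝕜 (Set.range v))ᗮ := by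
    simp only [mem_orthogonal_span_range_iff, inner_orthogonalProjectionOnto_eq_of_mem_right]
  rw [← orthogonal_eq_bot_iff, eq_bot_iff, eq_bot_iff]
  constructor
  · rintro h y ⟨hyK, hy⟩
    simpa using h ((key ⟨y, hyK⟩).mpr hy)
  · intro h y hy
    simpa using h ⟨y.2, (key y).mp hy⟩

theorem LinearMap.IsSymmetric.ker_inf_orthogonal_eq_bot_iff {𝕜 E : Type*} [RCLike 𝕜]
    [NormedAddCommGroup E] [InnerProductSpace 𝕜 E] [FiniteDimensional 𝕜 E]
    {T : E →ₗ[𝕜] E} (hT : T.IsSymmetric) {V : Submodule 𝕜 E}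
    (hV : finrank 𝕜 (LinearMap.ker T) = finrank 𝕜 V) :
    LinearMap.ker T ⊓ Vᗮ = ⊥ ↔ ∀ w ∈ Vᗮ, T w ∈ V → w = 0 := by
  constructor
  · intro hdisj w hw hTw
    have hsup : LinearMap.ker T ⊔ Vᗮ = ⊤ :=
      eq_top_of_disjoint _ _ (by rw [hV, finrank_add_finrank_orthogonal]) (disjoint_iff.mpr hdisj)
    have hrange : LinearMap.range T = (LinearMap.ker T)ᗮ := by
      rw [← hT.orthogonal_range, orthogonal_orthogonal]
    have hTw0 : T w ∈ (LinearMap.ker T ⊔ Vᗮ)ᗮ := by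
      rw [← inf_orthogonal, orthogonal_orthogonal, ← hrange]
      exact ⟨LinearMap.mem_range_self T w, hTw⟩
    rw [hsup, top_orthogonal_eq_bot, mem_bot] at hTw0
    rw [← mem_bot 𝕜, ← hdisj]
    exact ⟨hTw0, hw⟩
  · intro h
    refine eq_bot_iff.mpr fun w ⟨hker, hw⟩ => (mem_bot 𝕜).mpr (h w hw ?_)
    rw [LinearMap.mem_ker.mp hker]
    exact zero_mem V

theorem exists_basis_eq_iff {K V ι : Type*} [DivisionRing K] [AddCommGroup V] [Module K V]
    [Fintype ι] (f : ι → V) :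
    (∃ b : Basis ι K V, ∀ i, b i = f i) ↔
      Fintype.card ι = finrank K V ∧ span K (Set.range f) = ⊤ := by
  constructor
  · rintro ⟨b, hb⟩
    obtain rfl : ⇑b = f := funext hb
    exact ⟨(finrank_eq_card_basis b).symm, b.span_eq⟩
  · rintro ⟨hcard, hspan⟩
    exact ⟨basisOfTopLeSpanOfCardEqFinrank f hspan.ge hcard, fun i => by
      rw [coe_basisOfTopLeSpanOfCardEqFinrank]⟩

namespace EuclideanSpace

variable (𝕜 : Type*) [RCLike 𝕜] {ι : Type*} [Fintype ι] [DecidableEq ι]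

def coordSubspace (s : Finset ι) : Submodule 𝕜 (EuclideanSpace 𝕜 ι) :=
  span 𝕜 (Set.range fun j : s => EuclideanSpace.single (j : ι) (1 : 𝕜))

variable {𝕜}

theorem mem_orthogonal_coordSubspace {s : Finset ι} {w : EuclideanSpace 𝕜 ι} :
    w ∈ (coordSubspace 𝕜 s)ᗮ ↔ ∀ j ∈ s, w j = 0 := by
  simp [coordSubspace, mem_orthogonal_span_range_iff, inner_single_left]

theorem mem_coordSubspace {s : Finset ι} {u : EuclideanSpace 𝕜 ι} :
    u ∈ coordSubspace 𝕜 s ↔ ∀ i ∉ s, u i = 0 := by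
  rw [← orthogonal_orthogonal (coordSubspace 𝕜 s), mem_orthogonal]
  constructor
  · intro h i hi
    have hsingle : EuclideanSpace.single i (1 : 𝕜) ∈ (coordSubspace 𝕜 s)ᗮ :=
      mem_orthogonal_coordSubspace.mpr fun j hj => by
        simp [show j ≠ i from fun h => hi (h ▸ hj)]
    simpa [inner_single_left] using h _ hsingle
  · intro h w hw
    rw [mem_orthogonal_coordSubspace] at hw
    refine Finset.sum_eq_zero fun i _ => ?_
    by_cases hi : i ∈ s <;> simp [hw, h, hi]

theorem finrank_coordSubspace (s : Finset ι) : finrank 𝕜 (coordSubspace 𝕜 s) = s.card :=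
  (finrank_span_eq_card (orthonormal_single.linearIndependent.comp _ Subtype.val_injective)).trans
    (Fintype.card_coe s)

end EuclideanSpace

namespace Matrix

variable {m R : Type*} [Fintype m] [CommRing R]

theorem mulVec_apply_eq_submatrix_mulVec (M : Matrix m m R) {s : Finset m} {v : m → R}
    (hv : ∀ j ∉ s, v j = 0) (i : s) :
    (M *ᵥ v) i = (M.submatrix (↑) (↑) *ᵥ fun j : s => v j) i := by
  simp only [mulVec, dotProduct, submatrix_apply]
  rw [Finset.sum_coe_sort s (fun j => M i j * v j)]
  exact (Finset.sum_subset (Finset.subset_univ s) fun j _ hj => by rw [hv j hj, mul_zero]).symm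

theorem ker_mulVecLin_submatrix_eq_bot_iff (M : Matrix m m R) (s : Finset m) :
    LinearMap.ker (M.submatrix ((↑) : s → m) ((↑) : s → m)).mulVecLin = ⊥ ↔
      ∀ v : m → R, (∀ j ∉ s, v j = 0) → (∀ i ∈ s, (M *ᵥ v) i = 0) → v = 0 := by
  classical
  rw [LinearMap.ker_eq_bot']
  constructor
  · intro h v hv hMv
    have hres : (fun j : s => v j) = 0 := h _ <| funext fun i => by
      rw [mulVecLin_apply, ← mulVec_apply_eq_submatrix_mulVec M hv, hMv i i.2, Pi.zero_apply]
    funext j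
    by_cases hj : j ∈ s
    · exact congrFun hres ⟨j, hj⟩
    · exact hv j hj
  · intro h x hx
    let v : m → R := fun j => if hj : j ∈ s then x ⟨j, hj⟩ else 0
    have hv : ∀ j ∉ s, v j = 0 := fun j hj => dif_neg hj
    have hres : (fun j : s => v j) = x := funext fun j : s => dif_pos j.2
    have hv0 : v = 0 := h v hv fun i hi => by
      rw [mulVec_apply_eq_submatrix_mulVec M hv ⟨i, hi⟩, hres]
      exact congrFun hx ⟨i, hi⟩
    rw [← hres, hv0]
    rfl

theorem ker_mulVecLin_submatrix_compl_eq_bot_iff {𝕜 ι : Type*} [RCLike 𝕜] [Fintype ι]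
    [DecidableEq ι] (M : Matrix ι ι 𝕜) (s : Finset ι) :
    LinearMap.ker (M.submatrix ((↑) : ↥sᶜ → ι) ((↑) : ↥sᶜ → ι)).mulVecLin = ⊥ ↔
      ∀ w ∈ (EuclideanSpace.coordSubspace 𝕜 s)ᗮ,
        M.toEuclideanLin w ∈ EuclideanSpace.coordSubspace 𝕜 s → w = 0 := by
  simp only [ker_mulVecLin_submatrix_eq_bot_iff, EuclideanSpace.mem_orthogonal_coordSubspace,
    EuclideanSpace.mem_coordSubspace, Finset.mem_compl, not_not]
  constructor
  · intro h w hw hMw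
    exact WithLp.ofLp_injective 2 (h w.ofLp hw hMw)
  · intro h v hv hMv
    exact congrArg WithLp.ofLp (h (WithLp.toLp 2 v) hv hMv)

end Matrix

theorem finrank_eigSpaceE {n : ℕ} (A : Matrix (Fin n) (Fin n) ℝ) (lam : ℝ) :
    finrank ℝ (eigSpaceE A lam) = multE A lam := by
  have : eigSpaceE A lam = (eigSpace A lam).comap
      (WithLp.linearEquiv 2 ℝ (Fin n → ℝ) : EuclideanSpace ℝ (Fin n) →ₗ[ℝ] Fin n → ℝ) := by
    ext x
    exact (LinearEquiv.map_eq_zero_iff (WithLp.linearEquiv 2 ℝ (Fin n → ℝ))).symm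
  rw [this, comap_equiv_eq_map_symm, LinearEquiv.finrank_map_eq]
  rfl

theorem eigSpace_indMatrix {n : ℕ} (G : SimpleGraph (Fin n)) [DecidableRel G.Adj] (lam : ℝ)
    (S : Finset (Fin n)) :
    eigSpace (indMatrix G S) lam = LinearMap.ker
      ((G.adjMatrix ℝ - lam • 1).submatrix ((↑) : S → Fin n) ((↑) : S → Fin n)).mulVecLin := by
  rw [eigSpace, indMatrix, ← submatrix_one _ Subtype.val_injective]
  rfl

theorem stmt0_general {n : ℕ} (G : SimpleGraph (Fin n)) [DecidableRel G.Adj] (lam : ℝ)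
    (k : ℕ) (hk : k = multE (G.adjMatrix ℝ) lam)
    (X : Finset (Fin n)) :
    (∃ b : Module.Basis ↥X ℝ ↥(eigSpaceE (G.adjMatrix ℝ) lam),
        ∀ j : ↥X, b j =
          Submodule.orthogonalProjectionOnto (eigSpaceE (G.adjMatrix ℝ) lam)
            (EuclideanSpace.single (j : Fin n) (1 : ℝ))) ↔
      (X.card = k ∧ ¬ IsEig (indMatrix G Xᶜ) lam) := by
  have hsymm : (G.adjMatrix ℝ - lam • 1).toEuclideanLin.IsSymmetric :=
    isSymmetric_toEuclideanLin_iff.mpr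
      ((G.isHermitian_adjMatrix ℝ).sub (isHermitian_one.smul (IsSelfAdjoint.all lam)))
  rw [exists_basis_eq_iff, span_orthogonalProjectionOnto_eq_top_iff, finrank_eigSpaceE, ← hk,
    Fintype.card_coe, IsEig, not_not, eigSpace_indMatrix,
    ker_mulVecLin_submatrix_compl_eq_bot_iff]
  refine and_congr_right fun hcard => hsymm.ker_inf_orthogonal_eq_bot_iff ?_
  rw [← eigSpaceE, finrank_eigSpaceE, ← hk, ← hcard]
  exact (EuclideanSpace.finrank_coordSubspace X).symm

theorem stmt0 {n : ℕ} (G : SimpleGraph (Fin n)) [DecidableRel G.Adj] (lam : ℝ)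
    (k : ℕ) (hk : k = multE (G.adjMatrix ℝ) lam) (hk0 : 0 < k)
    (X : Finset (Fin n)) (hX : X ⊂ Finset.univ) :
    (∃ b : Module.Basis ↥X ℝ ↥(eigSpaceE (G.adjMatrix ℝ) lam),
        ∀ j : ↥X, b j =
          Submodule.orthogonalProjectionOnto (eigSpaceE (G.adjMatrix ℝ) lam)
            (EuclideanSpace.single (j : Fin n) (1 : ℝ))) ↔
      (X.card = k ∧ ¬ IsEig (indMatrix G Xᶜ) lam) :=
  stmt0_general G lam k hk X
end

section
/- Let G be a graph with adjacency matrix written in block form A_G = [[A_X, Nᵀ],[N, C]] with respect to a partition V(G) = X ∪ X̄, where A_X and C are the adjacency matrices of the subgraphs induced by X and X̄. Then X is a λ-star set of G if and only if λ is not an eigenvalue of C and A_X − λI_X = Nᵀ (C − λI_X̄)⁻¹ N. -/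
open Matrix

lemma not_isEig_iff_isUnit {m : Type*} [Fintype m] [DecidableEq m] (A : Matrix m m ℝ)
    (lam : ℝ) : ¬ IsEig A lam ↔ IsUnit (A - lam • 1) := by
  rw [IsEig, not_not, eigSpace, LinearMap.ker_eq_bot, Matrix.coe_mulVecLin,
    Matrix.mulVec_injective_iff_isUnit]

lemma finrank_ker_fromBlocks {p q : Type*} [Fintype p] [Fintype q] [DecidableEq p]
    [DecidableEq q] (S : Matrix p p ℝ) (D : Matrix q q ℝ) (hD : IsUnit D) :
    Module.finrank ℝ (LinearMap.ker (Matrix.fromBlocks S 0 0 D).mulVecLin)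
      = Module.finrank ℝ (LinearMap.ker S.mulVecLin) := by
  have hinj : Function.Injective D.mulVec := Matrix.mulVec_injective_iff_isUnit.mpr hD
  have key : ∀ v : p ⊕ q → ℝ, (Matrix.fromBlocks S 0 0 D).mulVecLin v = 0 ↔
      (S.mulVecLin (v ∘ Sum.inl) = 0 ∧ v ∘ Sum.inr = 0) := by
    intro v
    have hv : v = Sum.elim (v ∘ Sum.inl) (v ∘ Sum.inr) := by ext (i | i) <;> rfl
    rw [Matrix.mulVecLin_apply]
    conv_lhs => rw [hv, Matrix.fromBlocks_mulVec]
    simp only [Sum.elim_comp_inl, Sum.elim_comp_inr, Matrix.zero_mulVec, add_zero, zero_add]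
    constructor
    · intro h
      have h1 : S *ᵥ (v ∘ Sum.inl) = 0 := funext fun i => congrFun h (Sum.inl i)
      have h2 : D *ᵥ (v ∘ Sum.inr) = 0 := funext fun i => congrFun h (Sum.inr i)
      have h2' : v ∘ Sum.inr = 0 := hinj (by simpa using h2)
      exact ⟨by simpa using h1, h2'⟩
    · rintro ⟨h1, h2⟩
      rw [Matrix.mulVecLin_apply] at h1
      ext (i | i)
      · exact congrFun h1 i
      · simp [h2, Matrix.mulVec_zero]
  exact LinearEquiv.finrank_eq
    { toFun := fun v => ⟨v.1 ∘ Sum.inl, LinearMap.mem_ker.mpr ((key v.1).mp v.2).1⟩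
      map_add' := fun u v => Subtype.ext rfl
      map_smul' := fun c v => Subtype.ext rfl
      invFun := fun x => ⟨Sum.elim x.1 0,
        LinearMap.mem_ker.mpr ((key _).mpr ⟨by simp [LinearMap.mem_ker.mp x.2], rfl⟩)⟩
      left_inv := fun v => Subtype.ext (by
        have h2 := ((key v.1).mp v.2).2
        ext (i | i)
        · rfl
        · exact (congrFun h2 i).symm)
      right_inv := fun x => Subtype.ext rfl }

lemma submatrix_eq_fromBlocks {n : ℕ} (G : SimpleGraph (Fin n)) [DecidableRel G.Adj]
    (lam : ℝ) (X : Finset (Fin n)) :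
    ∃ e : (↥X ⊕ ↥(Xᶜ)) ≃ Fin n,
      (G.adjMatrix ℝ - lam • 1).submatrix e e =
        fromBlocks (indMatrix G X - lam • 1) (Nmat G X)ᵀ (Nmat G X) (Cmat G X - lam • 1) := by
  classical
  refine ⟨(Equiv.sumCongr (Equiv.refl ↥X)
    (Equiv.subtypeEquivRight (fun a => Finset.mem_compl))).trans
      (Equiv.sumCompl (· ∈ X)), ?_⟩
  ext (i | i) (j | j) <;>
    simp only [Matrix.submatrix_apply, Equiv.trans_apply, Equiv.sumCongr_apply, Sum.map_inl,
      Sum.map_inr, Equiv.refl_apply, Equiv.sumCompl_apply_inl, Equiv.sumCompl_apply_inr,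
      Equiv.subtypeEquivRight_apply_coe, Matrix.fromBlocks_apply₁₁, Matrix.fromBlocks_apply₁₂,
      Matrix.fromBlocks_apply₂₁, Matrix.fromBlocks_apply₂₂, Matrix.sub_apply, Matrix.smul_apply,
      Matrix.one_apply, indMatrix, Cmat, Nmat, Matrix.transpose_apply, smul_eq_mul]
  · by_cases h : i = j
    · simp [h]
    · rw [if_neg (fun hc => h (Subtype.ext hc)), if_neg h]
  · have hij : (i : Fin n) ≠ (j : Fin n) := by
      intro h
      have := j.2
      rw [Finset.mem_compl, ← h] at this
      exact this i.2
    rw [if_neg hij, mul_zero, sub_zero]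
    simp [SimpleGraph.adjMatrix_apply, G.adj_comm]
  · have hij : (i : Fin n) ≠ (j : Fin n) := by
      intro h
      have := i.2
      rw [Finset.mem_compl, h] at this
      exact this j.2
    rw [if_neg hij, mul_zero, sub_zero]
  · by_cases h : i = j
    · simp [h]
    · rw [if_neg (fun hc => h (Subtype.ext hc)), if_neg h]

lemma multE_eq {n : ℕ} (G : SimpleGraph (Fin n)) [DecidableRel G.Adj] (lam : ℝ)
    (X : Finset (Fin n)) (hD : IsUnit (Cmat G X - lam • 1)) :
    multE (G.adjMatrix ℝ) lam = Module.finrank ℝ (LinearMap.ker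
      (Matrix.mulVecLin ((indMatrix G X - lam • 1) -
        (Nmat G X)ᵀ * (Cmat G X - lam • 1)⁻¹ * Nmat G X))) := by
  classical
  obtain ⟨e, he⟩ := submatrix_eq_fromBlocks G lam X
  set M := G.adjMatrix ℝ - lam • (1 : Matrix (Fin n) (Fin n) ℝ) with hM
  set D := Cmat G X - lam • 1 with hDdef
  set S := (indMatrix G X - lam • 1) - (Nmat G X)ᵀ * D⁻¹ * Nmat G X with hS
  haveI : Invertible D := hD.invertible
  have hinv : ⅟D = D⁻¹ := invOf_eq_nonsing_inv D
  have hfac := Matrix.fromBlocks_eq_of_invertible₂₂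
    (indMatrix G X - lam • 1) (Nmat G X)ᵀ (Nmat G X) D
  have hdetP : IsUnit (fromBlocks (1 : Matrix ↥X ↥X ℝ) ((Nmat G X)ᵀ * ⅟D) 0 1).det := by
    rw [Matrix.det_fromBlocks_zero₂₁, Matrix.det_one, Matrix.det_one, one_mul]
    exact isUnit_one
  have hdetL : IsUnit (fromBlocks (1 : Matrix ↥X ↥X ℝ) 0 (⅟D * Nmat G X) 1).det := by
    rw [Matrix.det_fromBlocks_zero₁₂, Matrix.det_one, Matrix.det_one, one_mul]
    exact isUnit_one
  have hrank : M.rank = (fromBlocks S 0 0 D).rank := by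
    rw [← Matrix.rank_submatrix M e e, he, hfac,
      Matrix.rank_mul_eq_left_of_isUnit_det _ _ hdetL,
      Matrix.rank_mul_eq_right_of_isUnit_det _ _ hdetP, hinv]
  have h1 := LinearMap.finrank_range_add_finrank_ker M.mulVecLin
  have h2 := LinearMap.finrank_range_add_finrank_ker (fromBlocks S 0 0 D).mulVecLin
  rw [Module.finrank_fintype_fun_eq_card] at h1 h2
  have hcard : Fintype.card (↥X ⊕ ↥(Xᶜ)) = Fintype.card (Fin n) := Fintype.card_congr e
  have hker := finrank_ker_fromBlocks S D hD
  have hm : multE (G.adjMatrix ℝ) lam = Module.finrank ℝ (LinearMap.ker M.mulVecLin) := rfl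
  have e1 : M.rank = Module.finrank ℝ (LinearMap.range M.mulVecLin) := rfl
  have e2 : (fromBlocks S 0 0 D).rank =
      Module.finrank ℝ (LinearMap.range (fromBlocks S 0 0 D).mulVecLin) := rfl
  rw [hm, ← hker]
  omega

theorem stmt2 {n : ℕ} (G : SimpleGraph (Fin n)) [DecidableRel G.Adj] (lam : ℝ)
    (X : Finset (Fin n)) :
    IsStarSet G lam X ↔
      (¬ IsEig (Cmat G X) lam ∧
        indMatrix G X - lam • 1 =
          (Nmat G X)ᵀ * (Cmat G X - lam • 1)⁻¹ * Nmat G X) := by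
  classical
  have hCeq : Cmat G X = indMatrix G Xᶜ := rfl
  rw [IsStarSet, ← hCeq, not_isEig_iff_isUnit]
  constructor
  · rintro ⟨hcard, hD⟩
    refine ⟨hD, ?_⟩
    rw [multE_eq G lam X hD] at hcard
    set S := (indMatrix G X - lam • 1) - (Nmat G X)ᵀ * (Cmat G X - lam • 1)⁻¹ * Nmat G X with hS
    have hle : Module.finrank ℝ (LinearMap.ker S.mulVecLin) ≤
        Module.finrank ℝ (↥X → ℝ) := Submodule.finrank_le _
    have htop : LinearMap.ker S.mulVecLin = ⊤ := by
      apply Submodule.eq_top_of_finrank_eq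
      rw [← hcard, Module.finrank_fintype_fun_eq_card, Fintype.card_coe]
    have hzero : S.mulVecLin = 0 := LinearMap.ker_eq_top.mp htop
    have hSzero : S = 0 := by
      ext i j
      have := congrFun (congrArg (fun f => f (Pi.single j 1)) (congrArg DFunLike.coe hzero)) i
      simpa [Matrix.mulVecLin_apply, Matrix.mulVec_single_one] using this
    exact sub_eq_zero.mp hSzero
  · rintro ⟨hD, heq⟩
    refine ⟨?_, hD⟩
    rw [multE_eq G lam X hD, sub_eq_zero.mpr heq, Matrix.mulVecLin_zero, LinearMap.ker_zero,
      finrank_top, Module.finrank_fintype_fun_eq_card, Fintype.card_coe]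
end

section
/- Let X be a λ-star set of a graph G with adjacency matrix in block form [[A_X, Nᵀ],[N, C]]. Then the eigenspace of A_G for λ is exactly the set of vectors of the form (y, −(C − λI)⁻¹ N y) for y ∈ ℝ^{|X|}. -/
open Matrix

/-!
The rows of `(A - λ I) x = 0` indexed by `Xᶜ` read `(C - λ I) x_Xᶜ + N x_X = 0`, so every
eigenvector is determined by its restriction to `X` through `x_Xᶜ = -(C - λ I)⁻¹ N x_X`.
Restriction to `X` is therefore injective on the eigenspace, and since `|X|` is the dimension of
the eigenspace it is also surjective; a vector satisfying the formula then coincides with the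
eigenvector having the same restriction to `X`.
-/

section

variable {m : Type*} [Fintype m] [DecidableEq m]

lemma isUnit_sub_smul_one_of_not_isEig {A : Matrix m m ℝ} {lam : ℝ} (h : ¬ IsEig A lam) :
    IsUnit (A - lam • 1) := by
  rw [IsEig, not_not, eigSpace, LinearMap.ker_eq_bot] at h
  exact mulVec_injective_iff_isUnit.mp h

lemma Finset.funext_of_restrict_compl {β : Type*} {X : Finset m} {x y : m → β}
    (hX : (fun j : ↥X => x j) = fun j : ↥X => y j)
    (hXc : (fun i : ↥Xᶜ => x i) = fun i : ↥Xᶜ => y i) : x = y := by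
  funext i
  by_cases hi : i ∈ X
  · exact congrFun hX ⟨i, hi⟩
  · exact congrFun hXc ⟨i, Finset.mem_compl.mpr hi⟩

lemma Matrix.mulVec_comp_eq_submatrix_add_compl {n l R : Type*} [NonUnitalNonAssocSemiring R]
    (M : Matrix n m R) (r : l → n) (X : Finset m) (x : m → R) :
    (M *ᵥ x) ∘ r = M.submatrix r ((↑) : ↥Xᶜ → m) *ᵥ (fun j : ↥Xᶜ => x j)
      + M.submatrix r ((↑) : ↥X → m) *ᵥ (fun j : ↥X => x j) := by
  funext i
  simp only [Function.comp_apply, Pi.add_apply, mulVec, dotProduct, submatrix_apply]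
  rw [Finset.sum_coe_sort X (fun j => M (r i) j * x j),
    Finset.sum_coe_sort Xᶜ (fun j => M (r i) j * x j), Finset.sum_compl_add_sum]

lemma Matrix.submatrix_one_compl (R : Type*) [Zero R] [One R] (X : Finset m) :
    (1 : Matrix m m R).submatrix ((↑) : ↥Xᶜ → m) ((↑) : ↥X → m) = 0 := by
  ext i j
  exact one_apply_ne fun h => Finset.mem_compl.mp i.2 (h ▸ j.2)

variable {A : Matrix m m ℝ} {lam : ℝ} {X : Finset m}

lemma compl_eq_of_mem_eigSpace
    (hC : ¬ IsEig (A.submatrix ((↑) : ↥Xᶜ → m) ((↑) : ↥Xᶜ → m)) lam) {x : m → ℝ}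
    (hx : x ∈ eigSpace A lam) :
    (fun i : ↥Xᶜ => x i) =
      -((A.submatrix ((↑) : ↥Xᶜ → m) ((↑) : ↥Xᶜ → m) - lam • 1)⁻¹ *ᵥ
        (A.submatrix ((↑) : ↥Xᶜ → m) ((↑) : ↥X → m) *ᵥ fun j : ↥X => x j)) := by
  set C := A.submatrix ((↑) : ↥Xᶜ → m) ((↑) : ↥Xᶜ → m) - lam • 1
  have hdet : IsUnit C.det := (isUnit_iff_isUnit_det C).mp (isUnit_sub_smul_one_of_not_isEig hC)
  have hblock : C *ᵥ (fun i : ↥Xᶜ => x i) +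
      A.submatrix ((↑) : ↥Xᶜ → m) ((↑) : ↥X → m) *ᵥ (fun j : ↥X => x j) = 0 := by
    have hrows :=
      (A - lam • (1 : Matrix m m ℝ)).mulVec_comp_eq_submatrix_add_compl ((↑) : ↥Xᶜ → m) X x
    have hdiag : (A - lam • 1).submatrix ((↑) : ↥Xᶜ → m) ((↑) : ↥Xᶜ → m) = C := by
      change A.submatrix _ _ - lam • (1 : Matrix m m ℝ).submatrix _ _ = _
      rw [submatrix_one _ Subtype.val_injective]
    have hoff : (A - lam • 1).submatrix ((↑) : ↥Xᶜ → m) ((↑) : ↥X → m) =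
        A.submatrix (↑) (↑) := by
      change A.submatrix _ _ - lam • (1 : Matrix m m ℝ).submatrix _ _ = _
      rw [submatrix_one_compl, smul_zero, sub_zero]
    rwa [show (A - lam • 1) *ᵥ x = 0 from hx, hdiag, hoff, eq_comm] at hrows
  rw [eq_neg_of_add_eq_zero_right hblock, mulVec_neg, neg_neg, mulVec_mulVec,
    nonsing_inv_mul _ hdet, one_mulVec]

lemma eq_of_restrict_eq_of_compl_eq {x y : m → ℝ}
    (hx : (fun i : ↥Xᶜ => x i) =
      -((A.submatrix ((↑) : ↥Xᶜ → m) ((↑) : ↥Xᶜ → m) - lam • 1)⁻¹ *ᵥ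
        (A.submatrix ((↑) : ↥Xᶜ → m) ((↑) : ↥X → m) *ᵥ fun j : ↥X => x j)))
    (hy : (fun i : ↥Xᶜ => y i) =
      -((A.submatrix ((↑) : ↥Xᶜ → m) ((↑) : ↥Xᶜ → m) - lam • 1)⁻¹ *ᵥ
        (A.submatrix ((↑) : ↥Xᶜ → m) ((↑) : ↥X → m) *ᵥ fun j : ↥X => y j)))
    (hxy : (fun j : ↥X => x j) = fun j : ↥X => y j) : x = y :=
  Finset.funext_of_restrict_compl hxy (by rw [hx, hy, hxy])

lemma surjective_restrict_eigSpace (hcard : X.card = multE A lam)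
    (hC : ¬ IsEig (A.submatrix ((↑) : ↥Xᶜ → m) ((↑) : ↥Xᶜ → m)) lam) :
    Function.Surjective
      ((LinearMap.funLeft ℝ ℝ ((↑) : ↥X → m)).domRestrict (eigSpace A lam)) := by
  refine (LinearMap.injective_iff_surjective_of_finrank_eq_finrank ?_).mp ?_
  · rw [Module.finrank_fintype_fun_eq_card, Fintype.card_coe, hcard, multE]
  · rintro ⟨u, hu⟩ ⟨v, hv⟩ huv
    exact Subtype.ext <| eq_of_restrict_eq_of_compl_eq
      (compl_eq_of_mem_eigSpace hC hu) (compl_eq_of_mem_eigSpace hC hv) huv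

theorem mem_eigSpace_iff_compl_eq (hcard : X.card = multE A lam)
    (hC : ¬ IsEig (A.submatrix ((↑) : ↥Xᶜ → m) ((↑) : ↥Xᶜ → m)) lam) (x : m → ℝ) :
    x ∈ eigSpace A lam ↔ (fun i : ↥Xᶜ => x i) =
      -((A.submatrix ((↑) : ↥Xᶜ → m) ((↑) : ↥Xᶜ → m) - lam • 1)⁻¹ *ᵥ
        (A.submatrix ((↑) : ↥Xᶜ → m) ((↑) : ↥X → m) *ᵥ fun j : ↥X => x j)) := by
  refine ⟨compl_eq_of_mem_eigSpace hC, fun hx => ?_⟩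
  obtain ⟨⟨v, hv⟩, hvx⟩ := surjective_restrict_eigSpace hcard hC fun j : ↥X => x j
  obtain rfl : v = x := eq_of_restrict_eq_of_compl_eq (compl_eq_of_mem_eigSpace hC hv) hx hvx
  exact hv

end

theorem stmt3 {n : ℕ} (G : SimpleGraph (Fin n)) [DecidableRel G.Adj] (lam : ℝ)
    (X : Finset (Fin n)) (hX : IsStarSet G lam X) (x : Fin n → ℝ) :
    x ∈ eigSpace (G.adjMatrix ℝ) lam ↔
      (fun i : ↥(Xᶜ) => x (i : Fin n)) =
        -((Cmat G X - lam • 1)⁻¹ *ᵥ (Nmat G X *ᵥ fun j : ↥X => x (j : Fin n))) :=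
  mem_eigSpace_iff_compl_eq hX.1 hX.2 x
end

section
/- Let G be a graph of order n, λ ∈ σ(G), and X ⊂ V(G) a λ-star set of G with adjacency matrix in block form [[A_X, Nᵀ],[N, C]]. Then the rows of the |X̄| × n matrix [N C − λI] span the row space of A_G − λI_n. -/
/-!
Restricting the rows of `A - λI` indexed by `X̄` to the columns `X̄` gives the rows of `C - λI`,
which is nonsingular; hence those rows are linearly independent. By rank–nullity the row space
of `A - λI` has dimension `n - dim ker (A - λI) = n - |X| = |X̄|`, so they span it.
-/

open Matrix

namespace Matrix

variable {K m n ι κ : Type*} [Field K]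

theorem linearIndependent_row_comp_of_submatrix (M : Matrix m n K) (r : ι → m) (c : κ → n)
    (h : LinearIndependent K (M.submatrix r c).row) : LinearIndependent K (M.row ∘ r) :=
  h.of_comp (LinearMap.funLeft K K c)

theorem rank_add_finrank_ker [Fintype n] (M : Matrix m n K) :
    M.rank + Module.finrank K (LinearMap.ker M.mulVecLin) = Fintype.card n := by
  rw [rank, LinearMap.finrank_range_add_finrank_ker, Module.finrank_fintype_fun_eq_card]

theorem span_row_comp_eq_of_linearIndependent [Finite m] [Fintype n] [Fintype ι]
    {M : Matrix m n K} {r : ι → m} (hli : LinearIndependent K (M.row ∘ r))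
    (hrank : M.rank ≤ Fintype.card ι) :
    Submodule.span K (Set.range (M.row ∘ r)) = Submodule.span K (Set.range M.row) := by
  refine Submodule.eq_of_le_of_finrank_le
    (Submodule.span_mono (Set.range_comp_subset_range r M.row)) ?_
  rwa [← rank_eq_finrank_span_row, finrank_span_eq_card hli]

end Matrix

theorem isUnit_sub_smul_of_not_isEig {m : Type*} [Fintype m] [DecidableEq m] {A : Matrix m m ℝ}
    {lam : ℝ} (h : ¬ IsEig A lam) : IsUnit (A - lam • 1) := by
  rw [IsEig, not_not, eigSpace, LinearMap.ker_eq_bot] at h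
  exact mulVec_injective_iff_isUnit.mp h

section StarSet

variable {n : ℕ} (G : SimpleGraph (Fin n)) [DecidableRel G.Adj] (lam : ℝ)

theorem submatrix_adjMatrix_sub_smul (S : Finset (Fin n)) :
    (G.adjMatrix ℝ - lam • 1).submatrix (fun i : S => (i : Fin n)) (fun j : S => (j : Fin n)) =
      indMatrix G S - lam • 1 := by
  change indMatrix G S - lam • (1 : Matrix (Fin n) (Fin n) ℝ).submatrix Subtype.val Subtype.val = _
  rw [submatrix_one _ Subtype.val_injective]

variable {G lam}

theorem IsStarSet.rank_adjMatrix_sub_smul {X : Finset (Fin n)} (hX : IsStarSet G lam X) :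
    (G.adjMatrix ℝ - lam • 1).rank = Xᶜ.card := by
  have := (G.adjMatrix ℝ - lam • 1).rank_add_finrank_ker
  rw [Fintype.card_fin] at this
  rw [Finset.card_compl, Fintype.card_fin, hX.1, multE, eigSpace]
  omega

theorem IsStarSet.linearIndependent_row_compl {X : Finset (Fin n)} (hX : IsStarSet G lam X) :
    LinearIndependent ℝ ((G.adjMatrix ℝ - lam • 1).row ∘ fun i : ↥(Xᶜ) => (i : Fin n)) := by
  apply linearIndependent_row_comp_of_submatrix _ _ (fun j : ↥(Xᶜ) => (j : Fin n))
  rw [submatrix_adjMatrix_sub_smul, linearIndependent_rows_iff_isUnit]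
  exact isUnit_sub_smul_of_not_isEig hX.2

end StarSet

theorem stmt4_general {n : ℕ} (G : SimpleGraph (Fin n)) [DecidableRel G.Adj] (lam : ℝ)
    (X : Finset (Fin n)) (hX : IsStarSet G lam X) :
    Submodule.span ℝ
        (Set.range fun i : ↥(Xᶜ) => (G.adjMatrix ℝ - lam • 1) (i : Fin n)) =
      Submodule.span ℝ
        (Set.range fun i : Fin n => (G.adjMatrix ℝ - lam • 1) i) :=
  span_row_comp_eq_of_linearIndependent hX.linearIndependent_row_compl
    (by rw [hX.rank_adjMatrix_sub_smul, Fintype.card_coe])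

theorem stmt4 {n : ℕ} (G : SimpleGraph (Fin n)) [DecidableRel G.Adj] (lam : ℝ)
    (hlam : IsEig (G.adjMatrix ℝ) lam)
    (X : Finset (Fin n)) (hX : IsStarSet G lam X) :
    Submodule.span ℝ
        (Set.range fun i : ↥(Xᶜ) => (G.adjMatrix ℝ - lam • 1) (i : Fin n)) =
      Submodule.span ℝ
        (Set.range fun i : Fin n => (G.adjMatrix ℝ - lam • 1) i) :=
  stmt4_general G lam X hX
end

section
/- Let G be a graph of order n with at least one edge and X a λ-star set of G, with adjacency matrix in block form [[A_X, Nᵀ],[N, C]]. Then a subset X′ ⊂ V(G) is a λ-star set of G if and only if the square submatrix of [N C − λI] formed by the columns indexed by the vertices not in X′ is nonsingular. -/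
open Matrix

namespace StarAux

variable {n : ℕ}

lemma dot_restrict (S : Finset (Fin n)) (y u : Fin n → ℝ) (hy : ∀ i, i ∉ S → y i = 0) :
    y ⬝ᵥ u = (fun i : ↥S => y (i : Fin n)) ⬝ᵥ (fun i : ↥S => u (i : Fin n)) := by
  simp only [dotProduct]
  rw [Finset.sum_coe_sort S (fun j => y j * u j)]
  exact (Finset.sum_subset (Finset.subset_univ S) (fun x _ hx => by simp [hy x hx])).symm

lemma blk_mulVec (M : Matrix (Fin n) (Fin n) ℝ) (S T : Finset (Fin n))
    (v : Fin n → ℝ) (hv : ∀ i, i ∉ T → v i = 0) (i : ↥S) :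
    (M.submatrix (fun a : ↥S => (a : Fin n)) (fun b : ↥T => (b : Fin n))).mulVec
      (fun j : ↥T => v (j : Fin n)) i = M.mulVec v (i : Fin n) := by
  simp only [Matrix.mulVec, dotProduct, Matrix.submatrix_apply]
  rw [Finset.sum_coe_sort T (fun j => M (i : Fin n) j * v j)]
  exact Finset.sum_subset (Finset.subset_univ T) (fun x _ hx => by simp [hv x hx])

variable (M : Matrix (Fin n) (Fin n) ℝ)

lemma orth (hsym : Mᵀ = M) (v u : Fin n → ℝ) (hu : M.mulVec u = 0) :
    M.mulVec v ⬝ᵥ u = 0 := by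
  rw [dotProduct_comm, Matrix.dotProduct_mulVec]
  have h : u ᵥ* M = M *ᵥ u := by conv_lhs => rw [← hsym, Matrix.vecMul_transpose]
  rw [h, hu, zero_dotProduct]

/-- If the block (rows `R`, cols `C`) has trivial kernel then every element of the
kernel of `M` vanishing off `C` is zero. -/
lemma ker_of_blk (R C : Finset (Fin n))
    (hblk : Function.Injective
      ((M.submatrix (fun a : ↥R => (a : Fin n)) (fun b : ↥C => (b : Fin n))).mulVec))
    (u : Fin n → ℝ) (hu : M.mulVec u = 0) (hC : ∀ i, i ∉ C → u i = 0) : u = 0 := by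
  have h1 : (M.submatrix (fun a : ↥R => (a : Fin n)) (fun b : ↥C => (b : Fin n))).mulVec
      (fun j : ↥C => u (j : Fin n)) = 0 := by
    funext i
    rw [blk_mulVec M R C u hC i, hu]
    rfl
  have h2 : (fun j : ↥C => u (j : Fin n)) = 0 := by
    apply hblk
    rw [h1, Matrix.mulVec_zero]
  funext i
  by_cases h : i ∈ C
  · exact congrFun h2 ⟨i, h⟩
  · exact hC i h

lemma supported_zero (S : Finset (Fin n))
    (hsurj : ∀ z : ↥S → ℝ, ∃ u, M.mulVec u = 0 ∧ (fun i : ↥S => u (i : Fin n)) = z)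
    (y : Fin n → ℝ) (hy : ∀ i, i ∉ S → y i = 0)
    (horth : ∀ u, M.mulVec u = 0 → y ⬝ᵥ u = 0) : y = 0 := by
  obtain ⟨u, hu, huS⟩ := hsurj (fun i : ↥S => y (i : Fin n))
  have h := horth u hu
  rw [dot_restrict S y u hy, huS, dotProduct_self_eq_zero] at h
  funext i
  by_cases hi : i ∈ S
  · exact congrFun h ⟨i, hi⟩
  · exact hy i hi

lemma blk_inj (hsym : Mᵀ = M) (S C : Finset (Fin n))
    (hsurj : ∀ z : ↥S → ℝ, ∃ u, M.mulVec u = 0 ∧ (fun i : ↥S => u (i : Fin n)) = z)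
    (hinj : ∀ u, M.mulVec u = 0 → (∀ i, i ∉ C → u i = 0) → u = 0) :
    Function.Injective
      ((M.submatrix (fun a : ↥(Sᶜ) => (a : Fin n)) (fun b : ↥C => (b : Fin n))).mulVec) := by
  have key : ∀ w, (M.submatrix (fun a : ↥(Sᶜ) => (a : Fin n))
      (fun b : ↥C => (b : Fin n))).mulVec w = 0 → w = 0 := by
    intro w hw
    set v : Fin n → ℝ := fun i => if h : i ∈ C then w ⟨i, h⟩ else 0 with hvdef
    have hvC : ∀ i, i ∉ C → v i = 0 := fun i hi => dif_neg hi
    have hvw : (fun j : ↥C => v (j : Fin n)) = w := by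
      funext j
      simp [hvdef, j.2]
    have hMv : ∀ i, i ∉ S → M.mulVec v i = 0 := by
      intro i hi
      have hiR : i ∈ Sᶜ := Finset.mem_compl.mpr hi
      have h3 := blk_mulVec M Sᶜ C v hvC ⟨i, hiR⟩
      rw [hvw] at h3
      rw [← h3, hw]
      rfl
    have hMv0 : M.mulVec v = 0 :=
      supported_zero M S hsurj _ hMv (fun u hu => orth M hsym v u hu)
    have hv0 : v = 0 := hinj v hMv0 hvC
    rw [← hvw]
    funext j
    exact congrFun hv0 _
  intro a b hab
  have h5 : (M.submatrix (fun a : ↥(Sᶜ) => (a : Fin n))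
      (fun b : ↥C => (b : Fin n))).mulVec (a - b) = 0 := by
    rw [Matrix.mulVec_sub, hab, sub_self]
  exact sub_eq_zero.mp (key _ h5)

lemma surj_of_inj (S : Finset (Fin n))
    (hcard : S.card = Module.finrank ℝ (LinearMap.ker M.mulVecLin))
    (hinj : ∀ u, M.mulVec u = 0 → (∀ i ∈ S, u i = 0) → u = 0) :
    ∀ z : ↥S → ℝ, ∃ u, M.mulVec u = 0 ∧ (fun i : ↥S => u (i : Fin n)) = z := by
  set K := LinearMap.ker M.mulVecLin with hK
  let φ : K →ₗ[ℝ] (↥S → ℝ) :=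
    (LinearMap.funLeft ℝ ℝ (fun i : ↥S => (i : Fin n))).comp K.subtype
  have hφinj : Function.Injective φ := by
    intro a b hab
    apply Subtype.ext
    have hsub : M.mulVec ((a : Fin n → ℝ) - b) = 0 := by
      have ha : M.mulVecLin (a : Fin n → ℝ) = 0 := a.2
      have hb : M.mulVecLin (b : Fin n → ℝ) = 0 := b.2
      have h1 : M.mulVecLin ((a : Fin n → ℝ) - b) = 0 := by
        rw [map_sub, ha, hb, sub_self]
      simpa [Matrix.mulVecLin_apply] using h1
    have hS : ∀ i ∈ S, ((a : Fin n → ℝ) - b) i = 0 := by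
      intro i hi
      have h2 := congrFun hab (⟨i, hi⟩ : ↥S)
      simp only [φ, LinearMap.comp_apply, LinearMap.funLeft_apply, Submodule.subtype_apply] at h2
      simp [h2]
    have h3 := hinj _ hsub hS
    exact sub_eq_zero.mp h3
  have hdim : Module.finrank ℝ K = Module.finrank ℝ (↥S → ℝ) := by
    rw [Module.finrank_fintype_fun_eq_card, Fintype.card_coe]
    exact hcard.symm
  have hφsurj := (LinearMap.injective_iff_surjective_of_finrank_eq_finrank hdim).mp hφinj
  intro z
  obtain ⟨u, hz⟩ := hφsurj z
  exact ⟨u.1, u.2, hz⟩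

lemma notEig_iff (G : SimpleGraph (Fin n)) [DecidableRel G.Adj] (lam : ℝ)
    (S : Finset (Fin n)) :
    (¬ IsEig (indMatrix G Sᶜ) lam) ↔ Function.Injective
      (((G.adjMatrix ℝ - lam • 1)).submatrix
        (fun a : ↥(Sᶜ) => (a : Fin n)) (fun b : ↥(Sᶜ) => (b : Fin n))).mulVec := by
  have hmat : indMatrix G Sᶜ - lam • (1 : Matrix ↥(Sᶜ) ↥(Sᶜ) ℝ) =
      (G.adjMatrix ℝ - lam • 1).submatrix
        (fun a : ↥(Sᶜ) => (a : Fin n)) (fun b : ↥(Sᶜ) => (b : Fin n)) := by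
    ext i j
    simp [indMatrix, Matrix.sub_apply, Matrix.smul_apply, Matrix.one_apply, Subtype.coe_inj]
  rw [IsEig, not_not, eigSpace, hmat, LinearMap.ker_eq_bot]
  exact Iff.rfl

end StarAux

theorem stmt5 {n : ℕ} (G : SimpleGraph (Fin n)) [DecidableRel G.Adj] (lam : ℝ)
    (hedge : ∃ u v, G.Adj u v)
    (X : Finset (Fin n)) (hX : IsStarSet G lam X) (X' : Finset (Fin n)) :
    IsStarSet G lam X' ↔
      Function.Bijective
        (Matrix.mulVecLin
          ((G.adjMatrix ℝ - lam • 1).submatrix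
            (fun i : ↥(Xᶜ) => (i : Fin n)) (fun j : ↥(X'ᶜ) => (j : Fin n)))) := by
  classical
  set M : Matrix (Fin n) (Fin n) ℝ := G.adjMatrix ℝ - lam • 1 with hM
  have hsym : Mᵀ = M := by
    rw [hM, Matrix.transpose_sub, Matrix.transpose_smul, Matrix.transpose_one,
      SimpleGraph.transpose_adjMatrix]
  have hXblk := (StarAux.notEig_iff G lam X).mp hX.2
  have hXker : ∀ u, M.mulVec u = 0 → (∀ i ∈ X, u i = 0) → u = 0 := by
    intro u hu hz
    exact StarAux.ker_of_blk M Xᶜ Xᶜ hXblk u hu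
      (fun i hi => hz i (by simpa using hi))
  have hmultK : multE (G.adjMatrix ℝ) lam = Module.finrank ℝ (LinearMap.ker M.mulVecLin) := rfl
  have hXsurj := StarAux.surj_of_inj M X (hX.1.trans hmultK) hXker
  have hXle : X.card ≤ n := by simpa using X.card_le_univ
  have hX'le : X'.card ≤ n := by simpa using X'.card_le_univ
  constructor
  · rintro ⟨hcard, hnotEig⟩
    have hX'blk := (StarAux.notEig_iff G lam X').mp hnotEig
    have hX'restr : ∀ u, M.mulVec u = 0 → (∀ i, i ∉ X'ᶜ → u i = 0) → u = 0 :=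
      fun u hu h => StarAux.ker_of_blk M X'ᶜ X'ᶜ hX'blk u hu h
    have hinj : Function.Injective
        ((M.submatrix (fun a : ↥(Xᶜ) => (a : Fin n)) (fun b : ↥(X'ᶜ) => (b : Fin n))).mulVec) :=
      StarAux.blk_inj M hsym X X'ᶜ hXsurj hX'restr
    have hinj' : Function.Injective
        (Matrix.mulVecLin
          (M.submatrix (fun i : ↥(Xᶜ) => (i : Fin n)) (fun j : ↥(X'ᶜ) => (j : Fin n)))) := hinj
    have hdim : Module.finrank ℝ (↥(X'ᶜ) → ℝ) = Module.finrank ℝ (↥(Xᶜ) → ℝ) := by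
      rw [Module.finrank_fintype_fun_eq_card, Module.finrank_fintype_fun_eq_card,
        Fintype.card_coe, Fintype.card_coe, Finset.card_compl, Finset.card_compl,
        hcard, ← hX.1]
    exact ⟨hinj',
      (LinearMap.injective_iff_surjective_of_finrank_eq_finrank hdim).mp hinj'⟩
  · intro hbij
    have hinj : Function.Injective
        ((M.submatrix (fun a : ↥(Xᶜ) => (a : Fin n)) (fun b : ↥(X'ᶜ) => (b : Fin n))).mulVec) :=
      hbij.injective
    have hX'restr : ∀ u, M.mulVec u = 0 → (∀ i, i ∉ X'ᶜ → u i = 0) → u = 0 :=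
      fun u hu h => StarAux.ker_of_blk M Xᶜ X'ᶜ hinj u hu h
    have hcard : X'.card = X.card := by
      have e := LinearEquiv.ofBijective
        (Matrix.mulVecLin
          (M.submatrix (fun i : ↥(Xᶜ) => (i : Fin n)) (fun j : ↥(X'ᶜ) => (j : Fin n)))) hbij
      have hfr := e.finrank_eq
      rw [Module.finrank_fintype_fun_eq_card, Module.finrank_fintype_fun_eq_card,
        Fintype.card_coe, Fintype.card_coe, Finset.card_compl, Finset.card_compl] at hfr
      simp only [Fintype.card_fin] at hfr
      omega
    have hcard' : X'.card = multE (G.adjMatrix ℝ) lam := hcard.trans hX.1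
    have hX'ker : ∀ u, M.mulVec u = 0 → (∀ i ∈ X', u i = 0) → u = 0 :=
      fun u hu h => hX'restr u hu (fun i hi => h i (by simpa using hi))
    have hX'surj := StarAux.surj_of_inj M X' (hcard'.trans hmultK) hX'ker
    refine ⟨hcard', (StarAux.notEig_iff G lam X').mpr ?_⟩
    exact StarAux.blk_inj M hsym X' X'ᶜ hX'surj hX'restr
end

section
/- Let G be a graph without isolated vertices and X a λ-star set of G with adjacency blocks N and C as above, and set B = C − λI. Then λ is a non-main eigenvalue of G (i.e., its eigenspace is orthogonal to the all-ones vector) if and only if j_Bᵀ B⁻¹ N = j_Nᵀ, where j_B and j_N are all-ones vectors of lengths |X̄| and |X| respectively. -/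
open Matrix

section aux

variable {n : ℕ} (G : SimpleGraph (Fin n)) [DecidableRel G.Adj] (lam : ℝ) (X : Finset (Fin n))

lemma mem_eig_iff {m : Type*} [Fintype m] [DecidableEq m] (A : Matrix m m ℝ) (v : m → ℝ) :
    v ∈ eigSpace A lam ↔ A.mulVec v = lam • v := by
  simp [eigSpace, LinearMap.mem_ker, Matrix.mulVecLin_apply, Matrix.sub_mulVec,
    Matrix.smul_mulVec, Matrix.one_mulVec, sub_eq_zero]

lemma block_eq (v : Fin n → ℝ) (hv : v ∈ eigSpace (G.adjMatrix ℝ) lam) :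
    (Cmat G X - lam • 1).mulVec (fun i : ↥(Xᶜ) => v i)
      = - (Nmat G X).mulVec (fun j : ↥X => v j) := by
  rw [mem_eig_iff] at hv
  funext i
  have h := congrFun hv (i : Fin n)
  simp only [Matrix.mulVec, dotProduct, Pi.smul_apply, smul_eq_mul] at h
  have hsplit : ∑ j : Fin n, (G.adjMatrix ℝ) (i : Fin n) j * v j
      = (∑ j : ↥X, (G.adjMatrix ℝ) (i : Fin n) (j : Fin n) * v (j : Fin n))
        + (∑ j : ↥(Xᶜ), (G.adjMatrix ℝ) (i : Fin n) (j : Fin n) * v (j : Fin n)) := by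
    rw [← Finset.sum_add_sum_compl X (fun j => (G.adjMatrix ℝ) (i : Fin n) j * v j),
      ← Finset.sum_coe_sort X, ← Finset.sum_coe_sort Xᶜ]
  simp only [Matrix.mulVec, dotProduct, Pi.neg_apply, Matrix.sub_apply,
    Matrix.smul_apply, Matrix.one_apply, smul_eq_mul, Cmat, indMatrix, Nmat,
    Matrix.submatrix_apply, sub_mul, Finset.sum_sub_distrib, mul_ite, mul_one, mul_zero,
    ite_mul, zero_mul, Finset.sum_ite_eq, Finset.mem_univ, if_true]
  rw [hsplit] at h
  linarith

lemma Bunit (hX : IsStarSet G lam X) : IsUnit (Cmat G X - lam • (1 : Matrix ↥(Xᶜ) ↥(Xᶜ) ℝ)) := by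
  rw [← Matrix.mulVec_injective_iff_isUnit]
  have h : eigSpace (indMatrix G Xᶜ) lam = ⊥ := by
    by_contra hc; exact hX.2 hc
  intro a b hab
  have : a - b ∈ eigSpace (indMatrix G Xᶜ) lam := by
    rw [mem_eig_iff]
    have h0 : (Cmat G X - lam • 1).mulVec (a - b) = 0 := by
      rw [Matrix.mulVec_sub, hab, sub_self]
    have h1 : (Cmat G X).mulVec (a - b) - lam • (a - b)
        = (Cmat G X - lam • 1).mulVec (a - b) := by
      simp [Matrix.sub_mulVec, Matrix.smul_mulVec, Matrix.one_mulVec]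
    have := sub_eq_zero.mp (h1.trans h0)
    simpa [Cmat] using this
  rw [h, Submodule.mem_bot] at this
  exact sub_eq_zero.mp this

lemma comp_formula (hX : IsStarSet G lam X) (v : Fin n → ℝ)
    (hv : v ∈ eigSpace (G.adjMatrix ℝ) lam) :
    (fun i : ↥(Xᶜ) => v i)
      = -((Cmat G X - lam • 1)⁻¹ * Nmat G X).mulVec (fun j : ↥X => v j) := by
  set B := Cmat G X - lam • (1 : Matrix ↥(Xᶜ) ↥(Xᶜ) ℝ) with hB
  have hdet : IsUnit B.det := (Matrix.isUnit_iff_isUnit_det B).mp (Bunit G lam X hX)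
  have hinv : B⁻¹ * B = 1 := Matrix.nonsing_inv_mul B hdet
  have h := block_eq G lam X v hv
  calc (fun i : ↥(Xᶜ) => v i) = (B⁻¹ * B).mulVec (fun i : ↥(Xᶜ) => v i) := by
        rw [hinv, Matrix.one_mulVec]
    _ = B⁻¹.mulVec (B.mulVec (fun i : ↥(Xᶜ) => v i)) := by rw [Matrix.mulVec_mulVec]
    _ = B⁻¹.mulVec (- (Nmat G X).mulVec (fun j : ↥X => v j)) := by rw [h]
    _ = -((B⁻¹ * Nmat G X).mulVec (fun j : ↥X => v j)) := by
        rw [Matrix.mulVec_neg, Matrix.mulVec_mulVec]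

lemma sum_mulVec (M : Matrix ↥(Xᶜ) ↥X ℝ) (x : ↥X → ℝ) :
    ∑ i : ↥(Xᶜ), M.mulVec x i = Matrix.vecMul (fun _ : ↥(Xᶜ) => (1:ℝ)) M ⬝ᵥ x := by
  simp only [Matrix.mulVec, Matrix.vecMul, dotProduct, one_mul, Finset.sum_mul]
  rw [Finset.sum_comm]

lemma restrict_surj (hX : IsStarSet G lam X) (x : ↥X → ℝ) :
    ∃ v ∈ eigSpace (G.adjMatrix ℝ) lam, (fun j : ↥X => v j) = x := by
  set E := eigSpace (G.adjMatrix ℝ) lam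
  let F : E →ₗ[ℝ] (↥X → ℝ) :=
    (LinearMap.funLeft ℝ ℝ (fun j : ↥X => (j : Fin n))).comp E.subtype
  have hinj : Function.Injective F := by
    rw [← LinearMap.ker_eq_bot, Submodule.eq_bot_iff]
    rintro ⟨v, hv⟩ hFv
    have hX0 : (fun j : ↥X => v j) = 0 := hFv
    have hC0 : (fun i : ↥(Xᶜ) => v i) = 0 := by
      rw [comp_formula G lam X hX v hv, hX0]
      simp
    ext j
    by_cases hj : j ∈ X
    · exact congrFun hX0 ⟨j, hj⟩
    · exact congrFun hC0 ⟨j, Finset.mem_compl.mpr hj⟩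
  have hdim : Module.finrank ℝ E = Module.finrank ℝ (↥X → ℝ) := by
    rw [Module.finrank_pi, Fintype.card_coe]
    exact hX.1.symm
  have hsurj : Function.Surjective F :=
    (LinearMap.injective_iff_surjective_of_finrank_eq_finrank hdim).mp hinj
  obtain ⟨⟨v, hv⟩, hvx⟩ := hsurj x
  exact ⟨v, hv, hvx⟩

end aux

theorem stmt6 {n : ℕ} (G : SimpleGraph (Fin n)) [DecidableRel G.Adj] (lam : ℝ)
    (hiso : ∀ v : Fin n, ∃ u, G.Adj v u)
    (X : Finset (Fin n)) (hX : IsStarSet G lam X) :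
    (∀ x ∈ eigSpace (G.adjMatrix ℝ) lam, ∑ i, x i = 0) ↔
      Matrix.vecMul (fun _ : ↥(Xᶜ) => (1 : ℝ)) ((Cmat G X - lam • 1)⁻¹ * Nmat G X) =
        fun _ : ↥X => (1 : ℝ) := by
  set M := (Cmat G X - lam • 1)⁻¹ * Nmat G X with hM
  have key : ∀ v ∈ eigSpace (G.adjMatrix ℝ) lam,
      ∑ i : Fin n, v i = (∑ j : ↥X, v (j : Fin n))
        - Matrix.vecMul (fun _ : ↥(Xᶜ) => (1:ℝ)) M ⬝ᵥ (fun j : ↥X => v j) := by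
    intro v hv
    have h1 : ∑ i : Fin n, v i
        = (∑ j : ↥X, v (j : Fin n)) + (∑ i : ↥(Xᶜ), v (i : Fin n)) := by
      rw [← Finset.sum_add_sum_compl X v, ← Finset.sum_coe_sort X, ← Finset.sum_coe_sort Xᶜ]
    have h2 : ∑ i : ↥(Xᶜ), v (i : Fin n)
        = - (Matrix.vecMul (fun _ : ↥(Xᶜ) => (1:ℝ)) M ⬝ᵥ (fun j : ↥X => v j)) := by
      have h3 := comp_formula G lam X hX v hv
      calc ∑ i : ↥(Xᶜ), v (i : Fin n)
          = ∑ i : ↥(Xᶜ), (-(M.mulVec (fun j : ↥X => v j))) i := by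
            rw [← h3]
        _ = - ∑ i : ↥(Xᶜ), M.mulVec (fun j : ↥X => v j) i := by
            simp [Finset.sum_neg_distrib]
        _ = _ := by rw [sum_mulVec]
    rw [h1, h2]; ring
  constructor
  · intro hmain
    funext j₀
    obtain ⟨v, hv, hvx⟩ := restrict_surj G lam X hX (Pi.single j₀ 1)
    have h0 := hmain v hv
    have hk := key v hv
    rw [h0, hvx] at hk
    have hsum : ∑ j : ↥X, (Pi.single j₀ (1:ℝ)) j = 1 := by
      simp [Finset.sum_pi_single]
    have hdot : Matrix.vecMul (fun _ : ↥(Xᶜ) => (1:ℝ)) M ⬝ᵥ (Pi.single j₀ 1)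
        = Matrix.vecMul (fun _ : ↥(Xᶜ) => (1:ℝ)) M j₀ := by
      simp [dotProduct_single]
    rw [hdot] at hk
    have hone : Finset.univ.sum (Pi.single j₀ (1:ℝ)) = 1 := hsum
    rw [hone] at hk
    linarith
  · intro hrow v hv
    rw [key v hv, hrow]
    simp [dotProduct]
end

section
/- Let G be a graph, λ ∈ σ(G), and X a λ-star set of G with blocks N, C and B = C − λI. Then the vectors (−e_i, B⁻¹ N e_i), for i ranging over X (e_i the i-th standard basis vector of ℝ^{|X|}), form a basis of the eigenspace of A_G for λ. -/
open Matrix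

/-! If `x` is a `λ`-eigenvector, the `X̄`-rows of `(A - λI) x = 0` read `N x_X + B x_X̄ = 0`, so
`x_X̄ = -B⁻¹ N x_X`. Hence restricting to the coordinates in `X` is injective on the eigenspace,
and since `dim E(λ) = |X|` it is an isomorphism onto `ℝ^X`. The eigenvector restricting to
`-e_i` then has `X̄`-part `B⁻¹ N e_i`. -/

namespace Matrix

variable {m R K : Type*} [Fintype m] [DecidableEq m]

theorem submatrix_mulVec_add_submatrix_compl_mulVec [CommRing R] {l : Type*} (M : Matrix m m R)
    (r : l → m) (S : Finset m) (x : m → R) :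
    M.submatrix r (Subtype.val : S → m) *ᵥ (x ∘ Subtype.val) +
      M.submatrix r (Subtype.val : ↥Sᶜ → m) *ᵥ (x ∘ Subtype.val) = (M *ᵥ x) ∘ r := by
  funext w
  simp only [Pi.add_apply, Function.comp_apply, mulVec, dotProduct, submatrix_apply,
    Finset.sum_coe_sort S (fun i => M (r w) i * x i),
    Finset.sum_coe_sort Sᶜ (fun i => M (r w) i * x i), Finset.sum_add_sum_compl]

theorem sub_smul_one_submatrix_compl_compl [CommRing R] (A : Matrix m m R) (c : R)
    (S : Finset m) :
    (A - c • 1).submatrix (Subtype.val : ↥Sᶜ → m) Subtype.val =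
      A.submatrix (Subtype.val : ↥Sᶜ → m) (Subtype.val : ↥Sᶜ → m) - c • 1 := by
  rw [← submatrix_one (α := R) _ Subtype.val_injective]
  rfl

theorem sub_smul_one_submatrix_compl_val [CommRing R] (A : Matrix m m R) (c : R)
    (S : Finset m) :
    (A - c • 1).submatrix (Subtype.val : ↥Sᶜ → m) (Subtype.val : S → m) =
      A.submatrix Subtype.val Subtype.val := by
  ext w i
  have hwi : (w : m) ≠ i := fun h => Finset.mem_compl.mp w.2 (h ▸ i.2)
  simp [one_apply_ne hwi]

theorem comp_val_compl_eq_of_mulVec_eq_zero [CommRing R] (M : Matrix m m R) (S : Finset m)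
    (hB : IsUnit (M.submatrix (Subtype.val : ↥Sᶜ → m) Subtype.val).det) {x : m → R}
    (hx : M *ᵥ x = 0) :
    x ∘ (Subtype.val : ↥Sᶜ → m) =
      -((M.submatrix (Subtype.val : ↥Sᶜ → m) (Subtype.val : ↥Sᶜ → m))⁻¹ *
        M.submatrix (Subtype.val : ↥Sᶜ → m) (Subtype.val : S → m)) *ᵥ (x ∘ Subtype.val) := by
  have hblock := M.submatrix_mulVec_add_submatrix_compl_mulVec (Subtype.val : ↥Sᶜ → m) S x
  rw [hx, Pi.zero_comp] at hblock
  rw [neg_mulVec, ← mulVec_mulVec, ← mulVec_neg, neg_eq_of_add_eq_zero_right hblock,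
    mulVec_mulVec, nonsing_inv_mul _ hB, one_mulVec]

theorem injective_funLeft_comp_ker_subtype [CommRing R] (M : Matrix m m R) (S : Finset m)
    (hB : IsUnit (M.submatrix (Subtype.val : ↥Sᶜ → m) Subtype.val).det) :
    Function.Injective ((LinearMap.funLeft R R (Subtype.val : S → m)).comp
      (LinearMap.ker M.mulVecLin).subtype) := by
  rw [← LinearMap.ker_eq_bot, LinearMap.ker_eq_bot']
  rintro ⟨x, hx⟩ hxS
  replace hxS : x ∘ (Subtype.val : S → m) = 0 := hxS
  have hxSc := M.comp_val_compl_eq_of_mulVec_eq_zero S hB hx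
  rw [hxS, mulVec_zero] at hxSc
  ext v
  by_cases hv : v ∈ S
  · exact congrFun hxS ⟨v, hv⟩
  · exact congrFun hxSc ⟨v, Finset.mem_compl.mpr hv⟩

theorem exists_basis_ker_of_isUnit_det_submatrix_compl [Field K] (M : Matrix m m K)
    (S : Finset m) (hB : IsUnit (M.submatrix (Subtype.val : ↥Sᶜ → m) Subtype.val).det)
    (hdim : Module.finrank K (LinearMap.ker M.mulVecLin) = S.card) :
    ∃ b : Module.Basis S K (LinearMap.ker M.mulVecLin), ∀ i,
      (b i : m → K) ∘ (Subtype.val : S → m) = -Pi.single i 1 ∧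
      (b i : m → K) ∘ (Subtype.val : ↥Sᶜ → m) = fun w =>
        ((M.submatrix (Subtype.val : ↥Sᶜ → m) (Subtype.val : ↥Sᶜ → m))⁻¹ *
          M.submatrix (Subtype.val : ↥Sᶜ → m) (Subtype.val : S → m)) w i := by
  let E := LinearMap.linearEquivOfInjective _ (M.injective_funLeft_comp_ker_subtype S hB)
    (by rw [hdim, Module.finrank_fintype_fun_eq_card, Fintype.card_coe])
  refine ⟨((Pi.basisFun K S).map E.symm).map (LinearEquiv.neg K), fun i => ?_⟩
  set y := E.symm (Pi.single i 1)
  have hyS : (y : m → K) ∘ Subtype.val = Pi.single i 1 := E.apply_symm_apply (Pi.single i 1)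
  have hySc := M.comp_val_compl_eq_of_mulVec_eq_zero S hB y.2
  rw [hyS, neg_mulVec, mulVec_single_one] at hySc
  simp only [Module.Basis.map_apply, Pi.basisFun_apply, LinearEquiv.neg_apply, Submodule.coe_neg]
  exact ⟨congrArg Neg.neg hyS, (congrArg Neg.neg hySc).trans (neg_neg _)⟩

end Matrix

theorem isUnit_det_sub_smul_one_of_eigSpace_eq_bot {m : Type*} [Fintype m] [DecidableEq m]
    {A : Matrix m m ℝ} {lam : ℝ} (h : eigSpace A lam = ⊥) : IsUnit (A - lam • 1).det :=
  isUnit_iff_isUnit_det _ |>.mp <| mulVec_injective_iff_isUnit.mp <| LinearMap.ker_eq_bot.mp h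

theorem stmt7 {n : ℕ} (G : SimpleGraph (Fin n)) [DecidableRel G.Adj] (lam : ℝ)
    (X : Finset (Fin n)) (hX : IsStarSet G lam X) :
    ∃ bas : Module.Basis ↥X ℝ ↥(eigSpace (G.adjMatrix ℝ) lam),
      ∀ i : ↥X, (bas i : Fin n → ℝ) = fun v =>
        if h : v ∈ X then (if (⟨v, h⟩ : ↥X) = i then -1 else 0)
        else ((Cmat G X - lam • 1)⁻¹ * Nmat G X) ⟨v, Finset.mem_compl.mpr h⟩ i := by
  set M := G.adjMatrix ℝ - lam • (1 : Matrix (Fin n) (Fin n) ℝ)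
  have hC : M.submatrix (Subtype.val : ↥Xᶜ → Fin n) Subtype.val = Cmat G X - lam • 1 :=
    sub_smul_one_submatrix_compl_compl _ _ _
  have hN : M.submatrix (Subtype.val : ↥Xᶜ → Fin n) (Subtype.val : X → Fin n) = Nmat G X :=
    sub_smul_one_submatrix_compl_val _ _ _
  have hB : IsUnit (M.submatrix (Subtype.val : ↥Xᶜ → Fin n) Subtype.val).det :=
    hC ▸ isUnit_det_sub_smul_one_of_eigSpace_eq_bot (not_ne_iff.mp hX.2)
  obtain ⟨b, hb⟩ := M.exists_basis_ker_of_isUnit_det_submatrix_compl X hB hX.1.symm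
  rw [hC, hN] at hb
  refine ⟨b, fun i => funext fun v => ?_⟩
  by_cases hv : v ∈ X
  · rw [dif_pos hv]
    refine (congrFun (hb i).1 ⟨v, hv⟩).trans ?_
    rw [Pi.neg_apply, Pi.single_apply]
    split_ifs <;> simp
  · rw [dif_neg hv]
    exact congrFun (hb i).2 ⟨v, Finset.mem_compl.mpr hv⟩
end

section
/- Let X be a λ-star set of a graph G without isolated vertices, with blocks N and B = C − λI, let v ∈ X and y_v = B⁻¹ N e_v. If u ∈ X̄ satisfies (y_v)_u ≠ 0, then X′ = (X \ {v}) ∪ {u} is also a λ-star set of G. -/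
open Matrix

/-!
Work with `M = A - λ • 1`. When `|S|` is the multiplicity of `λ`, `S` is a star set iff no nonzero
vector of `ker M` vanishes on `S`. If `M` restricted to `Sᶜ` is nonsingular this is clear from the
`Sᶜ`-rows of `M z = 0`. Conversely, extend a kernel vector `y` of that block by zero: `w = M y` is
supported on `S` and, `M` being symmetric, orthogonal to `ker M`; by a dimension count `ker M`
restricts onto all of `ℝ^S`, so some `z ∈ ker M` agrees with `w` on `S`, and `w ⬝ w = z ⬝ w = 0`.

For the exchange, let `z ∈ ker M` vanish on `(X \ {v}) ∪ {u}`. The `Xᶜ`-rows of `M z = 0` read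
`B z|Xᶜ = -z_v N e_v`, so `0 = z_u = -z_v (y_v)_u` and `z_v = 0`; hence `z` vanishes on `X`, and
`z = 0` because `X` is a star set.
-/

lemma Submodule.exists_mem_eqOn_of_finrank_eq {ι K : Type*} [Fintype ι] [Field K]
    {E : Submodule K (ι → K)} {S : Finset ι} (hdim : Module.finrank K E = S.card)
    (hinj : ∀ z ∈ E, (∀ i ∈ S, z i = 0) → z = 0) (w : S → K) :
    ∃ z ∈ E, ∀ i : S, z i = w i := by
  let restrict : E →ₗ[K] (S → K) := (LinearMap.funLeft K K Subtype.val).comp E.subtype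
  have hrestrict : Function.Injective restrict := by
    refine (injective_iff_map_eq_zero restrict).2 fun z hz => Subtype.ext ?_
    exact hinj z z.2 fun i hi => congrFun hz ⟨i, hi⟩
  have hdim' : Module.finrank K E = Module.finrank K (S → K) := by
    rw [Module.finrank_fintype_fun_eq_card, Fintype.card_coe, hdim]
  obtain ⟨z, hz⟩ := (LinearMap.injective_iff_surjective_of_finrank_eq_finrank hdim').1
    hrestrict w
  exact ⟨z, z.2, congrFun hz⟩

namespace Matrix

variable {ι : Type*} [Fintype ι]

lemma dotProduct_mulVec_eq_zero_of_isSymm {R : Type*} [CommSemiring R] {M : Matrix ι ι R}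
    (hM : M.IsSymm) {z : ι → R} (hz : M *ᵥ z = 0) (y : ι → R) : z ⬝ᵥ M *ᵥ y = 0 := by
  rw [dotProduct_mulVec, ← mulVec_transpose, hM.eq, hz, zero_dotProduct]

variable [DecidableEq ι]

lemma mulVec_apply_eq_submatrix_compl_mulVec_add {R : Type*} [NonUnitalNonAssocSemiring R]
    (M : Matrix ι ι R) (S : Finset ι) (z : ι → R) (i : ↥Sᶜ) :
    (M *ᵥ z) i = ((M.submatrix (↑) (↑) : Matrix ↥Sᶜ ↥Sᶜ R) *ᵥ fun j : ↥Sᶜ => z j) i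
      + ∑ j ∈ S, M i j * z j := by
  simp only [mulVec, dotProduct]
  rw [← Finset.sum_compl_add_sum S, ← Finset.sum_coe_sort Sᶜ]
  rfl

lemma submatrix_compl_mulVec_eq_of_eqOn_zero {R : Type*} [NonUnitalNonAssocSemiring R]
    (M : Matrix ι ι R) {S : Finset ι} {z : ι → R} (hS : ∀ i ∈ S, z i = 0) :
    ((M.submatrix (↑) (↑) : Matrix ↥Sᶜ ↥Sᶜ R) *ᵥ fun j : ↥Sᶜ => z j)
      = fun i : ↥Sᶜ => (M *ᵥ z) i := by
  funext i
  rw [mulVec_apply_eq_submatrix_compl_mulVec_add M S z i,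
    Finset.sum_eq_zero fun j hj => by rw [hS j hj, mul_zero], add_zero]

variable {K : Type*} [Field K]

lemma isUnit_iff_forall_mulVec_eq_zero {m : Type*} [Fintype m] [DecidableEq m]
    {A : Matrix m m K} : IsUnit A ↔ ∀ v, A *ᵥ v = 0 → v = 0 := by
  rw [← ker_mulVecLin_eq_bot_iff, LinearMap.ker_eq_bot, ← mulVec_injective_iff_isUnit]
  rfl

lemma eq_zero_of_mulVec_eq_zero_of_eqOn_zero {M : Matrix ι ι K} {S : Finset ι}
    (hM : IsUnit (M.submatrix (↑) (↑) : Matrix ↥Sᶜ ↥Sᶜ K)) {z : ι → K} (hz : M *ᵥ z = 0)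
    (hS : ∀ i ∈ S, z i = 0) : z = 0 := by
  have hcompl : (fun j : ↥Sᶜ => z j) = 0 := by
    refine isUnit_iff_forall_mulVec_eq_zero.1 hM _ ?_
    rw [submatrix_compl_mulVec_eq_of_eqOn_zero M hS, hz]
    rfl
  funext i
  by_cases hi : i ∈ S
  · exact hS i hi
  · exact congrFun hcompl ⟨i, Finset.mem_compl.2 hi⟩

lemma restrict_compl_eq_smul_inv_mulVec_col {M : Matrix ι ι K} {S : Finset ι}
    (hM : IsUnit (M.submatrix (↑) (↑) : Matrix ↥Sᶜ ↥Sᶜ K)) {z : ι → K} (hz : M *ᵥ z = 0)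
    {v : ι} (hv : v ∈ S) (hS : ∀ i ∈ S, i ≠ v → z i = 0) :
    (fun i : ↥Sᶜ => z i)
      = -z v • ((M.submatrix (↑) (↑) : Matrix ↥Sᶜ ↥Sᶜ K)⁻¹ *ᵥ fun i : ↥Sᶜ => M i v) := by
  have hcompl : ((M.submatrix (↑) (↑) : Matrix ↥Sᶜ ↥Sᶜ K) *ᵥ fun j : ↥Sᶜ => z j)
      = -z v • fun i : ↥Sᶜ => M i v := by
    funext i
    have hi := mulVec_apply_eq_submatrix_compl_mulVec_add M S z i
    rw [hz, Finset.sum_eq_single_of_mem v hv fun j hj hjv => by rw [hS j hj hjv, mul_zero]]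
      at hi
    rw [Pi.smul_apply, smul_eq_mul, neg_mul, mul_comm, eq_neg_of_add_eq_zero_left hi.symm]
  rw [← mulVec_smul, ← hcompl, mulVec_mulVec,
    nonsing_inv_mul _ ((isUnit_iff_isUnit_det _).1 hM), one_mulVec]

lemma isUnit_submatrix_compl_of_isSymm [LinearOrder K] [IsStrictOrderedRing K]
    {M : Matrix ι ι K} (hM : M.IsSymm) {S : Finset ι}
    (hdim : Module.finrank K (LinearMap.ker M.mulVecLin) = S.card)
    (hinj : ∀ z ∈ LinearMap.ker M.mulVecLin, (∀ i ∈ S, z i = 0) → z = 0) :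
    IsUnit (M.submatrix (↑) (↑) : Matrix ↥Sᶜ ↥Sᶜ K) := by
  refine isUnit_iff_forall_mulVec_eq_zero.2 fun y hy => ?_
  let yExt : ι → K := fun i => if hi : i ∈ Sᶜ then y ⟨i, hi⟩ else 0
  have hyExt_S : ∀ i ∈ S, yExt i = 0 := fun i hi => dif_neg (Finset.notMem_compl.2 hi)
  have hyExt_compl : (fun j : ↥Sᶜ => yExt j) = y := funext fun j => dif_pos j.2
  set w := M *ᵥ yExt
  have hw_compl : ∀ i ∉ S, w i = 0 := fun i hi =>
    calc w i = ((M.submatrix (↑) (↑) : Matrix ↥Sᶜ ↥Sᶜ K) *ᵥ fun j : ↥Sᶜ => yExt j)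
          ⟨i, Finset.mem_compl.2 hi⟩ := by rw [submatrix_compl_mulVec_eq_of_eqOn_zero M hyExt_S]
      _ = 0 := by rw [hyExt_compl, hy]; rfl
  have hw : w = 0 := by
    obtain ⟨z, hz, hzw⟩ := Submodule.exists_mem_eqOn_of_finrank_eq hdim hinj fun i : S => w i
    refine dotProduct_self_eq_zero.1 ?_
    rw [← dotProduct_mulVec_eq_zero_of_isSymm hM hz yExt]
    refine Finset.sum_congr rfl fun i _ => ?_
    change w i * w i = z i * w i
    by_cases hi : i ∈ S
    · rw [hzw ⟨i, hi⟩]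
    · rw [hw_compl i hi, mul_zero, mul_zero]
  rw [← hyExt_compl, hinj yExt hw hyExt_S]
  rfl

end Matrix

section StarSet

variable {n : ℕ} (G : SimpleGraph (Fin n)) [DecidableRel G.Adj] (lam : ℝ)

lemma indMatrix_sub_smul_one (S : Finset (Fin n)) :
    indMatrix G S - lam • 1 = (G.adjMatrix ℝ - lam • 1).submatrix (↑) (↑) := by
  ext i j
  simp [indMatrix, one_apply]

lemma isStarSet_iff (X : Finset (Fin n)) :
    IsStarSet G lam X ↔ X.card = multE (G.adjMatrix ℝ) lam ∧
      ∀ z ∈ eigSpace (G.adjMatrix ℝ) lam, (∀ i ∈ X, z i = 0) → z = 0 := by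
  rw [IsStarSet, not_isEig_iff_isUnit, indMatrix_sub_smul_one]
  refine and_congr_right fun hcard =>
    ⟨fun hB z hz => eq_zero_of_mulVec_eq_zero_of_eqOn_zero hB hz,
      isUnit_submatrix_compl_of_isSymm ?_ hcard.symm⟩
  exact G.isSymm_adjMatrix.sub (isSymm_one.smul lam)

end StarSet

theorem stmt9_general {n : ℕ} (G : SimpleGraph (Fin n)) [DecidableRel G.Adj] (lam : ℝ)
    (X : Finset (Fin n)) (hX : IsStarSet G lam X)
    (v : Fin n) (hv : v ∈ X) (u : Fin n) (hu : u ∈ Xᶜ)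
    (h : ((Cmat G X - lam • 1)⁻¹ *ᵥ fun i : ↥(Xᶜ) => Nmat G X i ⟨v, hv⟩) ⟨u, hu⟩ ≠ 0) :
    IsStarSet G lam (insert u (X.erase v)) := by
  set M := G.adjMatrix ℝ - lam • 1
  have hB : IsUnit (M.submatrix (↑) (↑) : Matrix ↥Xᶜ ↥Xᶜ ℝ) := by
    rw [← indMatrix_sub_smul_one, ← not_isEig_iff_isUnit]
    exact hX.2
  have hcol : (fun i : ↥Xᶜ => Nmat G X i ⟨v, hv⟩) = fun i : ↥Xᶜ => M i v := funext fun i => by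
    simp [M, Nmat, one_apply_ne (ne_of_mem_of_not_mem hv (Finset.mem_compl.1 i.2)).symm]
  rw [Cmat, indMatrix_sub_smul_one, hcol] at h
  obtain ⟨hcard, hinj⟩ := (isStarSet_iff G lam X).1 hX
  have hu' : u ∉ X.erase v := fun hmem => Finset.mem_compl.1 hu (Finset.mem_of_mem_erase hmem)
  refine (isStarSet_iff G lam _).2 ⟨?_, fun z hz h0 => hinj z hz fun i hi => ?_⟩
  · rw [Finset.card_insert_of_notMem hu', Finset.card_erase_add_one hv, hcard]
  have h0' : ∀ i ∈ X, i ≠ v → z i = 0 := fun i hi hiv =>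
    h0 i (Finset.mem_insert_of_mem (Finset.mem_erase.2 ⟨hiv, hi⟩))
  by_cases hiv : i = v
  · have hzu := congrFun (restrict_compl_eq_smul_inv_mulVec_col hB hz hv h0') ⟨u, hu⟩
    rw [h0 u (Finset.mem_insert_self _ _), Pi.smul_apply, smul_eq_mul, eq_comm,
      mul_eq_zero, neg_eq_zero] at hzu
    exact hiv ▸ hzu.resolve_right h
  · exact h0' i hi hiv

theorem stmt9 {n : ℕ} (G : SimpleGraph (Fin n)) [DecidableRel G.Adj] (lam : ℝ)
    (hiso : ∀ v : Fin n, ∃ u, G.Adj v u)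
    (X : Finset (Fin n)) (hX : IsStarSet G lam X)
    (v : Fin n) (hv : v ∈ X) (u : Fin n) (hu : u ∈ Xᶜ)
    (h : ((Cmat G X - lam • 1)⁻¹ *ᵥ fun i : ↥(Xᶜ) => Nmat G X i ⟨v, hv⟩) ⟨u, hu⟩ ≠ 0) :
    IsStarSet G lam (insert u (X.erase v)) :=
  stmt9_general G lam X hX v hv u hu h
end

section
/- Let G be a graph without isolated vertices, λ ∈ σ(G), and X a λ-star set with blocks N, B = C − λI. A vertex v ∉ X belongs to some λ-star set of G if and only if the row of B⁻¹N indexed by v has at least one non-zero entry. Equivalently, if the v-row of B⁻¹N is zero then every eigenvector of A_G for λ vanishes at v. -/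
open Matrix

namespace StarAux

lemma mem_eigSpace_iff {m : Type*} [Fintype m] [DecidableEq m] (lam : ℝ) (A : Matrix m m ℝ)
    (x : m → ℝ) : x ∈ eigSpace A lam ↔ A.mulVec x = lam • x := by
  rw [eigSpace, LinearMap.mem_ker, mulVecLin_apply, sub_mulVec, smul_mulVec,
    one_mulVec, sub_eq_zero]

variable {n : ℕ} (G : SimpleGraph (Fin n)) [DecidableRel G.Adj] (lam : ℝ)

lemma eig_row {x : Fin n → ℝ} (hx : x ∈ eigSpace (G.adjMatrix ℝ) lam) (i : Fin n) :
    ∑ k, (G.adjMatrix ℝ) i k * x k = lam * x i := by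
  have h := congrFun ((mem_eigSpace_iff lam _ x).1 hx) i
  simpa [Matrix.mulVec, dotProduct] using h

lemma sum_split (S : Finset (Fin n)) (f : Fin n → ℝ) :
    ∑ k, f k = (∑ j : ↥S, f ↑j) + ∑ j : ↥(Sᶜ), f ↑j := by
  rw [Finset.sum_coe_sort, Finset.sum_coe_sort, Finset.sum_add_sum_compl]

lemma restrict_inj (S : Finset (Fin n)) (hS : ¬ IsEig (indMatrix G Sᶜ) lam)
    {x : Fin n → ℝ} (hx : x ∈ eigSpace (G.adjMatrix ℝ) lam)
    (h0 : ∀ i ∈ S, x i = 0) : x = 0 := by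
  have hbot : eigSpace (indMatrix G Sᶜ) lam = ⊥ := not_not.1 hS
  set y : ↥(Sᶜ) → ℝ := fun i => x ↑i with hy
  have hyE : y ∈ eigSpace (indMatrix G Sᶜ) lam := by
    rw [mem_eigSpace_iff]
    funext i
    have h1 := eig_row G lam hx ↑i
    rw [sum_split S (fun k => (G.adjMatrix ℝ) ↑i k * x k)] at h1
    have h2 : (∑ j : ↥S, (G.adjMatrix ℝ) ↑i ↑j * x ↑j) = 0 :=
      Finset.sum_eq_zero fun j _ => by rw [h0 ↑j j.2, mul_zero]
    rw [h2, zero_add] at h1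
    simpa [Matrix.mulVec, dotProduct, indMatrix, hy] using h1
  have hy0 : y = 0 := by
    rw [hbot] at hyE
    simpa using hyE
  funext i
  by_cases hi : i ∈ S
  · exact h0 i hi
  · have : y ⟨i, Finset.mem_compl.2 hi⟩ = 0 := congrFun hy0 _
    simpa [hy] using this

lemma restrict_surj (S : Finset (Fin n)) (hS : ¬ IsEig (indMatrix G Sᶜ) lam)
    (hcard : S.card = multE (G.adjMatrix ℝ) lam) (u : ↥S → ℝ) :
    ∃ x ∈ eigSpace (G.adjMatrix ℝ) lam, ∀ j : ↥S, x ↑j = u j := by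
  set E := eigSpace (G.adjMatrix ℝ) lam with hE
  let r : E →ₗ[ℝ] (↥S → ℝ) :=
    (LinearMap.funLeft ℝ ℝ (fun j : ↥S => (j : Fin n))).comp E.subtype
  have hinj : Function.Injective r := by
    rw [← LinearMap.ker_eq_bot, eq_bot_iff]
    intro z hz
    rw [LinearMap.mem_ker] at hz
    have hz0 : (z : Fin n → ℝ) = 0 := by
      apply restrict_inj G lam S hS z.2
      intro i hi
      exact congrFun hz ⟨i, hi⟩
    simpa [Submodule.mem_bot] using Subtype.ext hz0
  have hfr : Module.finrank ℝ E = Module.finrank ℝ (↥S → ℝ) := by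
    rw [Module.finrank_fintype_fun_eq_card, Fintype.card_coe, hcard]
    rfl
  obtain ⟨z, hzu⟩ := (LinearMap.injective_iff_surjective_of_finrank_eq_finrank hfr).1 hinj u
  exact ⟨z, z.2, fun j => congrFun hzu j⟩

lemma star_of_inj (S : Finset (Fin n))
    (hcard : S.card = multE (G.adjMatrix ℝ) lam)
    (hinj : ∀ x ∈ eigSpace (G.adjMatrix ℝ) lam, (∀ i ∈ S, x i = 0) → x = 0) :
    ¬ IsEig (indMatrix G Sᶜ) lam := by
  rw [IsEig, not_not, eq_bot_iff]
  intro y hy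
  rw [Submodule.mem_bot]
  set A := G.adjMatrix ℝ with hA
  set M := A - lam • (1 : Matrix (Fin n) (Fin n) ℝ) with hM
  have hMsymm : Mᵀ = M := by
    rw [hM, transpose_sub, transpose_smul, transpose_one, SimpleGraph.transpose_adjMatrix]
  set E := eigSpace A lam with hE
  set π := LinearMap.funLeft ℝ ℝ (fun j : ↥S => (j : Fin n)) with hπ
  set V := LinearMap.ker π with hV
  have hmemV : ∀ z : Fin n → ℝ, z ∈ V ↔ ∀ i ∈ S, z i = 0 := by
    intro z
    constructor
    · intro hz i hi
      exact congrFun hz ⟨i, hi⟩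
    · intro h
      have : π z = 0 := funext fun j => h ↑j j.2
      exact this
  have hVrank : Module.finrank ℝ (V : Submodule ℝ (Fin n → ℝ)) = n - S.card := by
    have hsurj : Function.Surjective π :=
      LinearMap.funLeft_surjective_of_injective ℝ ℝ _ Subtype.val_injective
    have h1 := LinearMap.finrank_range_add_finrank_ker π
    rw [LinearMap.range_eq_top.2 hsurj] at h1
    rw [finrank_top] at h1
    rw [Module.finrank_fintype_fun_eq_card, Fintype.card_coe,
      Module.finrank_fintype_fun_eq_card, Fintype.card_fin] at h1
    rw [← hV] at h1
    omega
  have hErank : Module.finrank ℝ (E : Submodule ℝ (Fin n → ℝ)) = S.card := hcard.symm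
  have hEV : E ⊓ V = ⊥ := by
    rw [eq_bot_iff]
    intro z hz
    rw [Submodule.mem_bot]
    exact hinj z hz.1 ((hmemV z).1 hz.2)
  have hsup : E ⊔ V = ⊤ := by
    apply Submodule.eq_top_of_finrank_eq
    have h2 := Submodule.finrank_sup_add_finrank_inf_eq E V
    rw [hEV, finrank_bot, add_zero, hErank, hVrank] at h2
    have hle : S.card ≤ n := by simpa using Finset.card_le_univ S
    rw [h2, Module.finrank_fintype_fun_eq_card, Fintype.card_fin]
    omega
  set yext : Fin n → ℝ := fun i => if h : i ∈ Sᶜ then y ⟨i, h⟩ else 0 with hyext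
  have hyV : yext ∈ V := (hmemV yext).2 fun i hi => dif_neg (by simp [hi])
  set w := M *ᵥ yext with hw
  have hy' := (mem_eigSpace_iff lam _ y).1 hy
  have hsumA : ∀ i : Fin n, (A *ᵥ yext) i = ∑ j : ↥(Sᶜ), A i ↑j * y j := by
    intro i
    have : (A *ᵥ yext) i = ∑ k, A i k * yext k := by
      simp [Matrix.mulVec, dotProduct]
    rw [this, sum_split S (fun k => A i k * yext k)]
    have t1 : (∑ j : ↥S, A i ↑j * yext ↑j) = 0 :=
      Finset.sum_eq_zero fun j _ => by
        have hz : yext ↑j = 0 := dif_neg (by simp [j.2])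
        rw [hz, mul_zero]
    rw [t1, zero_add]
    refine Finset.sum_congr rfl fun j _ => ?_
    have hz : yext ↑j = y j := dif_pos j.2
    rw [hz]
  have hwS : ∀ i, i ∈ Sᶜ → w i = 0 := by
    intro i hi
    have h1 := congrFun hy' ⟨i, hi⟩
    have h2 : ((indMatrix G Sᶜ) *ᵥ y) ⟨i, hi⟩ = ∑ j : ↥(Sᶜ), A i ↑j * y j := by
      simp [Matrix.mulVec, dotProduct, indMatrix, ite_mul, hA]
    rw [h2] at h1
    have h3 : w i = (A *ᵥ yext) i - lam * yext i := by
      rw [hw, hM, sub_mulVec, smul_mulVec, one_mulVec]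
      simp
    have h4 : yext i = y ⟨i, hi⟩ := dif_pos hi
    rw [h3, hsumA i, h1, h4]
    simp
  have hwE : ∀ x ∈ E, w ⬝ᵥ x = 0 := by
    intro x hx
    have hx0 : M *ᵥ x = 0 := hx
    rw [hw, dotProduct_comm, dotProduct_mulVec, ← mulVec_transpose, hMsymm, hx0,
      zero_dotProduct]
  have hwV : ∀ z ∈ V, w ⬝ᵥ z = 0 := by
    intro z hz
    have : w ⬝ᵥ z = ∑ i, w i * z i := rfl
    rw [this, sum_split S (fun i => w i * z i)]
    have t1 : (∑ j : ↥S, w ↑j * z ↑j) = 0 :=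
      Finset.sum_eq_zero fun j _ => by rw [(hmemV z).1 hz ↑j j.2, mul_zero]
    have t2 : (∑ j : ↥(Sᶜ), w ↑j * z ↑j) = 0 :=
      Finset.sum_eq_zero fun j _ => by rw [hwS ↑j j.2, zero_mul]
    rw [t1, t2, add_zero]
  have hw0 : w = 0 := by
    rw [← dotProduct_self_eq_zero (v := w)]
    have hwtop : w ∈ E ⊔ V := hsup ▸ Submodule.mem_top
    obtain ⟨a, ha, b, hb, hab⟩ := Submodule.mem_sup.1 hwtop
    nth_rewrite 2 [← hab]
    rw [dotProduct_add, hwE a ha, hwV b hb, add_zero]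
  have hyE : yext ∈ E := hw0
  have hy0 : yext = 0 := by
    have : yext ∈ E ⊓ V := ⟨hyE, hyV⟩
    rw [hEV] at this
    simpa using this
  funext j
  have h6 := congrFun hy0 ↑j
  rw [hyext] at h6
  simp only [dif_pos j.2] at h6
  exact h6

lemma Bdet (X : Finset (Fin n)) (hX2 : ¬ IsEig (indMatrix G Xᶜ) lam) :
    IsUnit (Cmat G X - lam • (1 : Matrix ↥(Xᶜ) ↥(Xᶜ) ℝ)).det := by
  rw [← Matrix.isUnit_iff_isUnit_det, ← Matrix.mulVec_injective_iff_isUnit]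
  have hbot : eigSpace (indMatrix G Xᶜ) lam = ⊥ := not_not.1 hX2
  have hker : LinearMap.ker (Matrix.mulVecLin
      (indMatrix G Xᶜ - lam • (1 : Matrix ↥(Xᶜ) ↥(Xᶜ) ℝ))) = ⊥ := hbot
  exact LinearMap.ker_eq_bot.1 hker

lemma eig_compl_row (X : Finset (Fin n)) (hX2 : ¬ IsEig (indMatrix G Xᶜ) lam)
    {x : Fin n → ℝ} (hx : x ∈ eigSpace (G.adjMatrix ℝ) lam) (i : ↥(Xᶜ)) :
    x ↑i = -∑ j : ↥X, ((Cmat G X - lam • 1)⁻¹ * Nmat G X) i j * x ↑j := by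
  set A := G.adjMatrix ℝ with hA
  set B := Cmat G X - lam • (1 : Matrix ↥(Xᶜ) ↥(Xᶜ) ℝ) with hB
  have hdet := Bdet G lam X hX2
  set u : ↥X → ℝ := fun j => x ↑j with hu
  set y : ↥(Xᶜ) → ℝ := fun i => x ↑i with hy
  have hrow : B *ᵥ y = -((Nmat G X) *ᵥ u) := by
    funext i'
    have h1 := eig_row G lam hx ↑i'
    rw [sum_split X (fun k => A ↑i' k * x k)] at h1
    have hBy : (B *ᵥ y) i' = (∑ j : ↥(Xᶜ), A ↑i' ↑j * x ↑j) - lam * x ↑i' := by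
      rw [hB, sub_mulVec, smul_mulVec, one_mulVec]
      simp [Matrix.mulVec, dotProduct, Cmat, indMatrix, hy, hA]
    have hNu : (-((Nmat G X) *ᵥ u)) i' = -∑ j : ↥X, A ↑i' ↑j * x ↑j := by
      simp [Matrix.mulVec, dotProduct, Nmat, hu, hA]
    rw [hBy, hNu]
    linarith
  have hy2 : y = -((B⁻¹ * Nmat G X) *ᵥ u) := by
    have h2 := congrArg (fun z => B⁻¹ *ᵥ z) hrow
    simpa [Matrix.mulVec_mulVec, Matrix.nonsing_inv_mul B hdet, Matrix.one_mulVec,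
      Matrix.mulVec_neg] using h2
  have h3 := congrFun hy2 i
  simpa [Matrix.mulVec, dotProduct, hy, hu] using h3


end StarAux

theorem stmt12 {n : ℕ} (G : SimpleGraph (Fin n)) [DecidableRel G.Adj] (lam : ℝ)
    (hiso : ∀ v : Fin n, ∃ u, G.Adj v u)
    (X : Finset (Fin n)) (hX : IsStarSet G lam X) (v : Fin n) (hv : v ∈ Xᶜ) :
    ((∃ X' : Finset (Fin n), IsStarSet G lam X' ∧ v ∈ X') ↔
        ∃ j : ↥X, ((Cmat G X - lam • 1)⁻¹ * Nmat G X) ⟨v, hv⟩ j ≠ 0) ∧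
    ((∀ j : ↥X, ((Cmat G X - lam • 1)⁻¹ * Nmat G X) ⟨v, hv⟩ j = 0) →
        ∀ x ∈ eigSpace (G.adjMatrix ℝ) lam, x v = 0) := by
  classical
  obtain ⟨hX1, hX2⟩ := hX
  have key : (∀ j : ↥X, ((Cmat G X - lam • 1)⁻¹ * Nmat G X) ⟨v, hv⟩ j = 0) →
      ∀ x ∈ eigSpace (G.adjMatrix ℝ) lam, x v = 0 := by
    intro h0 x hx
    have h1 := StarAux.eig_compl_row G lam X hX2 hx ⟨v, hv⟩
    rw [h1]
    simp [h0]
  refine ⟨⟨?_, ?_⟩, key⟩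
  · rintro ⟨X', ⟨hc', he'⟩, hvX'⟩
    by_contra hno
    push_neg at hno
    have hall := key hno
    obtain ⟨x, hxE, hxv⟩ := StarAux.restrict_surj G lam X' he' hc' (Pi.single ⟨v, hvX'⟩ 1)
    have h1 : x v = 1 := by
      have := hxv ⟨v, hvX'⟩
      rwa [Pi.single_eq_same] at this
    have h0 : x v = 0 := hall x hxE
    rw [h1] at h0
    exact one_ne_zero h0
  · rintro ⟨j, hj⟩
    obtain ⟨x, hxE, hxr⟩ := StarAux.restrict_surj G lam X hX2 hX1 (Pi.single j 1)
    have hxv : x v = -((Cmat G X - lam • 1)⁻¹ * Nmat G X) ⟨v, hv⟩ j := by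
      have h1 := StarAux.eig_compl_row G lam X hX2 hxE ⟨v, hv⟩
      rw [h1]
      congr 1
      rw [Finset.sum_congr rfl (fun j' _ => by rw [hxr j'])]
      simp [Pi.single_apply, mul_ite]
    have hvnotX : v ∉ X := Finset.mem_compl.1 hv
    have hjX : (↑j : Fin n) ∈ X := j.2
    set X' : Finset (Fin n) := insert v (X.erase ↑j) with hX'
    have hcard' : X'.card = X.card := by
      rw [hX', Finset.card_insert_of_notMem
          (fun hmem => hvnotX (Finset.mem_of_mem_erase hmem)),
        Finset.card_erase_of_mem hjX]
      have hpos : 0 < X.card := Finset.card_pos.2 ⟨↑j, hjX⟩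
      omega
    refine ⟨X', ⟨hcard'.trans hX1, ?_⟩, Finset.mem_insert_self _ _⟩
    apply StarAux.star_of_inj G lam X' (hcard'.trans hX1)
    intro z hzE hz0
    have hzv : z v = 0 := hz0 v (Finset.mem_insert_self _ _)
    have hzX : ∀ i ∈ X, i ≠ ↑j → z i = 0 := fun i hi hij =>
      hz0 i (Finset.mem_insert_of_mem (Finset.mem_erase.2 ⟨hij, hi⟩))
    set c := z ↑j with hc
    have hz' : z - c • x = 0 := by
      apply StarAux.restrict_inj G lam X hX2
        (Submodule.sub_mem _ hzE (Submodule.smul_mem _ _ hxE))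
      intro i hi
      have hxi : x i = (Pi.single j 1 : ↥X → ℝ) ⟨i, hi⟩ := by simpa using hxr ⟨i, hi⟩
      by_cases hij : i = ↑j
      · have hj' : (⟨i, hi⟩ : ↥X) = j := Subtype.ext hij
        rw [Pi.sub_apply, Pi.smul_apply, hxi, hj', Pi.single_eq_same, smul_eq_mul,
          mul_one, hc, ← hij, sub_self]
      · have hj' : (⟨i, hi⟩ : ↥X) ≠ j := fun h => hij (congrArg Subtype.val h)
        rw [Pi.sub_apply, Pi.smul_apply, hxi, Pi.single_eq_of_ne hj', smul_eq_mul,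
          mul_zero, hzX i hi hij, sub_zero]
    have hzc : z = c • x := by rwa [sub_eq_zero] at hz'
    have hc0 : c = 0 := by
      have := hzv
      rw [hzc] at this
      simp only [Pi.smul_apply, smul_eq_mul, hxv] at this
      rcases mul_eq_zero.1 this with h | h
      · exact h
      · exact absurd (neg_eq_zero.1 h) hj
    rw [hzc, hc0, zero_smul]
end

section
/- Let G be a graph with a star partition X_1 ∪ ⋯ ∪ X_m and no isolated vertices. If μ_i ∉ {−1, 0}, then X̄_i = V(G) \ X_i is a location-dominating set: it is dominating, and for any two distinct vertices u, v ∈ X_i, N_G(u) ∩ X̄_i ≠ N_G(v) ∩ X̄_i. -/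
open Matrix

lemma mem_eigSpace_iff {m : Type*} [Fintype m] [DecidableEq m]
    {A : Matrix m m ℝ} {lam : ℝ} {φ : m → ℝ} :
    φ ∈ eigSpace A lam ↔ A.mulVec φ = lam • φ := by
  simp only [eigSpace, LinearMap.mem_ker, mulVecLin_apply, sub_mulVec, smul_mulVec,
    one_mulVec, sub_eq_zero]

lemma eig_row {m : Type*} [Fintype m] [DecidableEq m]
    {A : Matrix m m ℝ} {lam : ℝ} {φ : m → ℝ} (h : φ ∈ eigSpace A lam) (v : m) :
    A.mulVec φ v = lam * φ v := by
  rw [mem_eigSpace_iff] at h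
  rw [h]; rfl

lemma star_surj {n : ℕ} (G : SimpleGraph (Fin n)) [DecidableRel G.Adj] {lam : ℝ}
    {X : Finset (Fin n)} (h : IsStarSet G lam X) (x : ↥X → ℝ) :
    ∃ φ ∈ eigSpace (G.adjMatrix ℝ) lam, ∀ u : ↥X, φ u = x u := by
  classical
  set E := eigSpace (G.adjMatrix ℝ) lam with hE
  let L : E →ₗ[ℝ] (↥X → ℝ) :=
    (LinearMap.funLeft ℝ ℝ (fun u : ↥X => (u : Fin n))).comp E.subtype
  have hinj : Function.Injective L := by
    rw [← LinearMap.ker_eq_bot]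
    rw [Submodule.eq_bot_iff]
    rintro ⟨φ, hφ⟩ hker
    have hX0 : ∀ w ∈ X, φ w = 0 := by
      intro w hw
      have := congrFun hker ⟨w, hw⟩
      exact this
    -- ψ ∈ eigSpace of induced matrix
    have hC0 : eigSpace (indMatrix G Xᶜ) lam = ⊥ := not_ne_iff.mp h.2
    have hψ : (fun z : ↥(Xᶜ) => φ (z : Fin n)) ∈ eigSpace (indMatrix G Xᶜ) lam := by
      rw [mem_eigSpace_iff]
      funext z
      have hrow : (G.adjMatrix ℝ).mulVec φ (z : Fin n) = lam * φ (z : Fin n) := eig_row hφ _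
      have hsplit : ∑ w : Fin n, (G.adjMatrix ℝ) (z : Fin n) w * φ w
          = ∑ w : ↥(Xᶜ), (G.adjMatrix ℝ) (z : Fin n) (w : Fin n) * φ (w : Fin n) := by
        rw [Finset.sum_coe_sort (Xᶜ) (fun w => (G.adjMatrix ℝ) (z : Fin n) w * φ w)]
        rw [← Finset.sum_add_sum_compl X (fun w => (G.adjMatrix ℝ) (z : Fin n) w * φ w)]
        rw [Finset.sum_eq_zero (fun w hw => by rw [hX0 w hw, mul_zero]), zero_add]
      have : (indMatrix G Xᶜ).mulVec (fun z : ↥(Xᶜ) => φ (z : Fin n)) z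
          = ∑ w : ↥(Xᶜ), (G.adjMatrix ℝ) (z : Fin n) (w : Fin n) * φ (w : Fin n) := rfl
      rw [this, ← hsplit]
      have : (G.adjMatrix ℝ).mulVec φ (z : Fin n)
          = ∑ w : Fin n, (G.adjMatrix ℝ) (z : Fin n) w * φ w := rfl
      rw [← this, hrow]; rfl
    have hψ0 : (fun z : ↥(Xᶜ) => φ (z : Fin n)) = 0 := by
      rw [hC0] at hψ; exact hψ
    have : φ = 0 := by
      funext w
      by_cases hw : w ∈ X
      · exact hX0 w hw
      · exact congrFun hψ0 ⟨w, Finset.mem_compl.mpr hw⟩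
    exact Subtype.ext this
  have hsurj : Function.Surjective L := by
    have h1 : Module.finrank ℝ (LinearMap.range L) = Module.finrank ℝ E :=
      LinearMap.finrank_range_of_inj hinj
    have h2 : Module.finrank ℝ E = X.card := h.1.symm
    have h3 : Module.finrank ℝ (↥X → ℝ) = X.card := by
      rw [Module.finrank_fintype_fun_eq_card, Fintype.card_coe]
    rw [← LinearMap.range_eq_top]
    exact Submodule.eq_top_of_finrank_eq (by rw [h1, h2, h3])
  obtain ⟨⟨φ, hφ⟩, hLφ⟩ := hsurj x
  exact ⟨φ, hφ, fun u => congrFun hLφ u⟩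

theorem stmt14 {n m : ℕ} (G : SimpleGraph (Fin n)) [DecidableRel G.Adj]
    (hiso : ∀ v : Fin n, ∃ u, G.Adj v u)
    (mu : Fin m → ℝ) (hinj : Function.Injective mu)
    (hall : ∀ x : ℝ, IsEig (G.adjMatrix ℝ) x ↔ ∃ i, x = mu i)
    (X : Fin m → Finset (Fin n))
    (hstar : ∀ i, IsStarSet G (mu i) (X i))
    (hdisj : ∀ i j, i ≠ j → Disjoint (X i) (X j))
    (hcover : Finset.univ.biUnion X = Finset.univ) :
    ∀ i, mu i ≠ -1 → mu i ≠ 0 →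
      ((∀ v ∈ X i, ∃ u, u ∉ X i ∧ G.Adj v u) ∧
        ∀ u ∈ X i, ∀ v ∈ X i, u ≠ v →
          G.neighborFinset u ∩ (X i)ᶜ ≠ G.neighborFinset v ∩ (X i)ᶜ) := by
  intro i h1 h0
  constructor
  · -- domination
    intro v hv
    by_contra hcon
    push_neg at hcon
    obtain ⟨φ, hφ, hres⟩ := star_surj G (hstar i)
      (fun w : ↥(X i) => if (w : Fin n) = v then (1:ℝ) else 0)
    have hrow := eig_row hφ v
    rw [SimpleGraph.adjMatrix_mulVec_apply] at hrow
    have hφv : φ v = 1 := by simpa using hres ⟨v, hv⟩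
    have hsum : ∑ u ∈ G.neighborFinset v, φ u = 0 := by
      refine Finset.sum_eq_zero fun u hu => ?_
      rw [SimpleGraph.mem_neighborFinset] at hu
      have huX : u ∈ X i := by by_contra hx; exact hcon u hx hu
      have hne : u ≠ v := (G.ne_of_adj hu).symm ∘ Eq.symm ∘ Eq.symm
      have := hres ⟨u, huX⟩
      simpa [hne] using this
    rw [hsum, hφv, mul_one] at hrow
    exact h0 hrow.symm
  · -- location
    intro u hu v hv huv heq
    obtain ⟨φ, hφ, hres⟩ := star_surj G (hstar i)
      (fun w : ↥(X i) => if (w : Fin n) = u then (1:ℝ) else if (w : Fin n) = v then -1 else 0)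
    have hφu : φ u = 1 := by simpa using hres ⟨u, hu⟩
    have hφv : φ v = -1 := by simpa [huv.symm] using hres ⟨v, hv⟩
    have rowu := eig_row hφ u
    have rowv := eig_row hφ v
    rw [SimpleGraph.adjMatrix_mulVec_apply, hφu, mul_one] at rowu
    rw [SimpleGraph.adjMatrix_mulVec_apply, hφv] at rowv
    rw [← Finset.sum_filter_add_sum_filter_not (G.neighborFinset u)
      (fun w => w ∈ (X i)ᶜ) φ] at rowu
    rw [← Finset.sum_filter_add_sum_filter_not (G.neighborFinset v)
      (fun w => w ∈ (X i)ᶜ) φ] at rowv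
    rw [Finset.filter_mem_eq_inter, heq, ← Finset.filter_mem_eq_inter] at rowu
    -- now the complement parts agree; compute the in-X parts
    have hA1 : ∑ w ∈ (G.neighborFinset u).filter (fun w => ¬ w ∈ (X i)ᶜ), φ w
        = if G.Adj u v then -1 else 0 := by
      rw [Finset.sum_congr rfl (fun w hw => ?_)]
      · rw [Finset.sum_ite_eq' _ v (fun _ => (-1:ℝ))]
        congr 1
        simp [Finset.mem_filter, SimpleGraph.mem_neighborFinset, hv]
      · simp only [Finset.mem_filter, SimpleGraph.mem_neighborFinset, Finset.mem_compl,
          not_not] at hw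
        have hne : w ≠ u := fun h => G.irrefl (h ▸ hw.1)
        have := hres ⟨w, hw.2⟩
        simp only [hne, if_neg, if_false] at this
        rw [this]
    have hA2 : ∑ w ∈ (G.neighborFinset v).filter (fun w => ¬ w ∈ (X i)ᶜ), φ w
        = if G.Adj u v then 1 else 0 := by
      rw [Finset.sum_congr rfl (fun w hw => ?_)]
      · rw [Finset.sum_ite_eq' _ u (fun _ => (1:ℝ))]
        congr 1
        simp [Finset.mem_filter, SimpleGraph.mem_neighborFinset, hu, G.adj_comm u v]
      · simp only [Finset.mem_filter, SimpleGraph.mem_neighborFinset, Finset.mem_compl,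
          not_not] at hw
        have hne : w ≠ v := fun h => G.irrefl (h ▸ hw.1)
        have := hres ⟨w, hw.2⟩
        simp only [hne, if_neg, if_false] at this
        rw [this]
    rw [hA1] at rowu
    rw [hA2] at rowv
    by_cases hadj : G.Adj u v
    · simp only [hadj, if_true] at rowu rowv
      apply h1; linarith
    · simp only [hadj, if_false] at rowu rowv
      apply h0; linarith
end

section
/- Let G be a graph of order n having the complete graph K_t (t ≥ 2) as a star complement for a main eigenvalue λ with λ ≠ 0. Then for every vertex v in the corresponding λ-star set X, λ is a main eigenvalue of the subgraph induced by X̄ ∪ {v}; hence ℵ_max(λ, G) = n − t. -/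
open Matrix

/-- The set of lam-main vertices of a lam-star set X: those v ∈ X for which lam is a
main eigenvalue of the subgraph induced by Xᶜ ∪ {v}. -/
def mainVerts {n : ℕ} (G : SimpleGraph (Fin n)) [DecidableRel G.Adj] (lam : ℝ)
    (X : Finset (Fin n)) : Set (Fin n) :=
  {v : Fin n | v ∈ X ∧ IsMainEig (indMatrix G (insert v Xᶜ)) lam}

/-- The maximum number of lam-main vertices over all lam-star sets of G. -/
noncomputable def alephMax {n : ℕ} (G : SimpleGraph (Fin n)) [DecidableRel G.Adj]
    (lam : ℝ) : ℕ :=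
  sSup {p : ℕ | ∃ X : Finset (Fin n), IsStarSet G lam X ∧ (mainVerts G lam X).ncard = p}

lemma eigSpace_mem_iff {m : Type*} [Fintype m] [DecidableEq m] (A : Matrix m m ℝ) (lam : ℝ)
    (x : m → ℝ) : x ∈ eigSpace A lam ↔ ∀ i, ∑ j, A i j * x j = lam * x i := by
  simp only [eigSpace, LinearMap.mem_ker, Matrix.mulVecLin_apply, funext_iff,
    Matrix.sub_mulVec, Pi.sub_apply, Pi.zero_apply, sub_eq_zero,
    Matrix.smul_mulVec, Matrix.one_mulVec, Pi.smul_apply, smul_eq_mul,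
    Matrix.mulVec, dotProduct]

lemma key_main {n t : ℕ} (G : SimpleGraph (Fin n)) [DecidableRel G.Adj] (lam : ℝ)
    (ht2 : 2 ≤ t) (hne : lam ≠ 0)
    (X : Finset (Fin n)) (hX : IsStarSet G lam X)
    (ht : Xᶜ.card = t)
    (hcomplete : ∀ u ∈ Xᶜ, ∀ v ∈ Xᶜ, u ≠ v → G.Adj u v)
    (v : Fin n) (hv : v ∈ X) : IsMainEig (indMatrix G (insert v Xᶜ)) lam := by
  set A := G.adjMatrix ℝ with hA
  have hC : eigSpace (indMatrix G Xᶜ) lam = ⊥ := not_ne_iff.mp hX.2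
  -- entries of induced matrix on Xᶜ
  have hCent : ∀ i j : ↥(Xᶜ : Finset (Fin n)), indMatrix G Xᶜ i j =
      if i = j then 0 else 1 := by
    intro i j
    by_cases h : i = j
    · subst h; simp [indMatrix, Matrix.submatrix_apply]
    · have hne' : (i : Fin n) ≠ (j : Fin n) := fun hc => h (Subtype.ext hc)
      simp [indMatrix, Matrix.submatrix_apply, h,
        hcomplete _ i.2 _ j.2 hne']
  -- lam ≠ -1
  have hlam1 : lam ≠ -1 := by
    intro hlam
    obtain ⟨a, ha, b, hb, hab⟩ := Finset.one_lt_card.mp (by omega : 1 < Xᶜ.card)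
    set a' : ↥(Xᶜ : Finset (Fin n)) := ⟨a, ha⟩
    set b' : ↥(Xᶜ : Finset (Fin n)) := ⟨b, hb⟩
    have hab' : a' ≠ b' := fun hc => hab (congrArg Subtype.val hc)
    set w : ↥(Xᶜ : Finset (Fin n)) → ℝ :=
      fun i => (if i = a' then (1 : ℝ) else 0) + (if i = b' then (-1 : ℝ) else 0) with hw
    have hwsum : ∑ j, w j = 0 := by
      simp [hw, Finset.sum_add_distrib, Finset.sum_ite_eq']
    have hwmem : w ∈ eigSpace (indMatrix G Xᶜ) lam := by
      rw [eigSpace_mem_iff]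
      intro i
      have : ∀ j, indMatrix G Xᶜ i j * w j = w j - (if j = i then w j else 0) := by
        intro j
        rw [hCent]
        by_cases h : j = i
        · subst h; simp
        · rw [if_neg (fun hc : i = j => h hc.symm), if_neg h, one_mul, sub_zero]
      rw [Finset.sum_congr rfl fun j _ => this j, Finset.sum_sub_distrib,
        Finset.sum_ite_eq' Finset.univ i w, hwsum, hlam]
      simp
    have hwne : w ≠ 0 := by
      intro h0
      have : w a' = 0 := congrFun h0 a'
      simp [hw, hab'] at this
    rw [hC, Submodule.mem_bot] at hwmem
    exact hwne hwmem
  -- the restriction map to X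
  set E := eigSpace A lam with hE
  let φ : E →ₗ[ℝ] (↥X → ℝ) :=
    { toFun := fun u i => (u : Fin n → ℝ) (i : Fin n)
      map_add' := fun _ _ => rfl
      map_smul' := fun _ _ => rfl }
  have hinj : Function.Injective φ := by
    rw [injective_iff_map_eq_zero]
    intro u hu0
    have hzero : ∀ i : ↥X, (u : Fin n → ℝ) (i : Fin n) = 0 := fun i => congrFun hu0 i
    have hueq := (eigSpace_mem_iff A lam _).mp u.2
    set w : ↥(Xᶜ : Finset (Fin n)) → ℝ := fun i => (u : Fin n → ℝ) (i : Fin n) with hw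
    have hwmem : w ∈ eigSpace (indMatrix G Xᶜ) lam := by
      rw [eigSpace_mem_iff]
      intro i
      have h1 : ∑ j : ↥(Xᶜ : Finset (Fin n)), indMatrix G Xᶜ i j * w j
          = ∑ j ∈ Xᶜ, A (i : Fin n) j * (u : Fin n → ℝ) j := by
        rw [← Finset.sum_coe_sort (Xᶜ) (fun j => A (i : Fin n) j * (u : Fin n → ℝ) j)]
        rfl
      have h2 : ∑ j ∈ X, A (i : Fin n) j * (u : Fin n → ℝ) j = 0 := by
        refine Finset.sum_eq_zero fun j hj => ?_
        rw [hzero ⟨j, hj⟩, mul_zero]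
      have h3 := Finset.sum_add_sum_compl X (fun j => A (i : Fin n) j * (u : Fin n → ℝ) j)
      rw [h1]
      rw [h2, zero_add] at h3
      rw [h3, hueq]
    rw [hC, Submodule.mem_bot] at hwmem
    apply Subtype.ext
    funext j
    by_cases hj : j ∈ X
    · exact hzero ⟨j, hj⟩
    · exact congrFun hwmem ⟨j, Finset.mem_compl.mpr hj⟩
  have hrank : Module.finrank ℝ E = Module.finrank ℝ (↥X → ℝ) := by
    have hm : Module.finrank ℝ E = multE (G.adjMatrix ℝ) lam := rfl
    rw [hm, ← hX.1, Module.finrank_fintype_fun_eq_card, Fintype.card_coe]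
  have hsurj := (LinearMap.injective_iff_surjective_of_finrank_eq_finrank hrank).mp hinj
  obtain ⟨u, hu⟩ := hsurj (fun i : ↥X => if (i : Fin n) = v then (1 : ℝ) else 0)
  have huX : ∀ i : ↥X, (u : Fin n → ℝ) (i : Fin n)
      = if (i : Fin n) = v then (1 : ℝ) else 0 := fun i => congrFun hu i
  have huv : (u : Fin n → ℝ) v = 1 := by simpa using huX ⟨v, hv⟩
  have hu0 : ∀ j ∈ X, j ≠ v → (u : Fin n → ℝ) j = 0 := by
    intro j hj hjv
    simpa [hjv] using huX ⟨j, hj⟩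
  have hueq := (eigSpace_mem_iff A lam _).mp u.2
  have hvX : v ∉ (Xᶜ : Finset (Fin n)) := by simp [hv]
  set S : Finset (Fin n) := insert v Xᶜ with hS
  refine ⟨fun i : ↥S => (u : Fin n → ℝ) (i : Fin n), ?_, ?_⟩
  · rw [eigSpace_mem_iff]
    intro i
    have h1 : ∑ j : ↥S, indMatrix G S i j * (u : Fin n → ℝ) (j : Fin n)
        = ∑ j ∈ S, A (i : Fin n) j * (u : Fin n → ℝ) j := by
      rw [← Finset.sum_coe_sort S (fun j => A (i : Fin n) j * (u : Fin n → ℝ) j)]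
      rfl
    have h2 : ∑ j ∈ Sᶜ, A (i : Fin n) j * (u : Fin n → ℝ) j = 0 := by
      refine Finset.sum_eq_zero fun j hj => ?_
      rw [Finset.mem_compl, hS, Finset.mem_insert] at hj
      push_neg at hj
      rw [hu0 j (by simpa using hj.2) hj.1, mul_zero]
    have h3 := Finset.sum_add_sum_compl S (fun j => A (i : Fin n) j * (u : Fin n → ℝ) j)
    rw [h2, add_zero] at h3
    show ∑ j : ↥S, indMatrix G S i j * (u : Fin n → ℝ) (j : Fin n)
        = lam * (u : Fin n → ℝ) (i : Fin n)
    rw [h1, h3, hueq]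
  · -- the sum over S is nonzero
    intro hsum0
    have hsumS : ∑ i ∈ S, (u : Fin n → ℝ) i = 0 := by
      rw [← Finset.sum_coe_sort S (fun i => (u : Fin n → ℝ) i)]
      exact hsum0
    set s : ℝ := ∑ i ∈ Xᶜ, (u : Fin n → ℝ) i with hs
    have hsm1 : s = -1 := by
      rw [hS, Finset.sum_insert hvX, huv] at hsumS
      linarith
    -- row v
    have hrowv : ∑ i ∈ Xᶜ, A v i * (u : Fin n → ℝ) i = lam := by
      have h0 := hueq v
      rw [huv, mul_one] at h0
      have h2 : ∑ j ∈ X, A v j * (u : Fin n → ℝ) j = 0 := by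
        refine Finset.sum_eq_zero fun j hj => ?_
        by_cases hjv : j = v
        · subst hjv; simp [hA]
        · rw [hu0 j hj hjv, mul_zero]
      have h3 := Finset.sum_add_sum_compl X (fun j => A v j * (u : Fin n → ℝ) j)
      rw [h2, zero_add] at h3
      rw [h3, h0]
    -- rows i ∈ Xᶜ
    have hrowi : ∀ i ∈ (Xᶜ : Finset (Fin n)),
        A i v + (s - (u : Fin n → ℝ) i) = lam * (u : Fin n → ℝ) i := by
      intro i hi
      have h0 := hueq i
      have h2 : ∑ j ∈ X, A i j * (u : Fin n → ℝ) j = A i v := by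
        rw [Finset.sum_eq_single_of_mem v hv]
        · rw [huv, mul_one]
        · intro j hj hjv
          rw [hu0 j hj hjv, mul_zero]
      have h4 : ∑ j ∈ Xᶜ, A i j * (u : Fin n → ℝ) j = s - (u : Fin n → ℝ) i := by
        have hterm : ∀ j ∈ (Xᶜ : Finset (Fin n)), A i j * (u : Fin n → ℝ) j
            = (u : Fin n → ℝ) j - (if j = i then (u : Fin n → ℝ) j else 0) := by
          intro j hj
          by_cases h : j = i
          · subst h; simp [hA]
          · simp [hA, h, hcomplete _ hi _ hj (fun hc => h hc.symm), G.adj_comm]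
        rw [Finset.sum_congr rfl hterm, Finset.sum_sub_distrib,
          Finset.sum_ite_eq' (Xᶜ) i (fun j => (u : Fin n → ℝ) j), if_pos hi, hs]
      have h3 := Finset.sum_add_sum_compl X (fun j => A i j * (u : Fin n → ℝ) j)
      rw [h2, h4] at h3
      rw [h3]
      exact h0
    -- multiply row i by A v i and sum
    have hAA : ∀ i ∈ (Xᶜ : Finset (Fin n)), A v i * A i v = A v i := by
      intro i hi
      by_cases h : G.Adj v i
      · simp [hA, h, G.adj_comm v i |>.mp h]
      · simp [hA, h]
    have hfinal : ∑ i ∈ Xᶜ, (A v i * A i v + (A v i * s - A v i * (u : Fin n → ℝ) i))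
        = ∑ i ∈ Xᶜ, lam * (A v i * (u : Fin n → ℝ) i) := by
      refine Finset.sum_congr rfl fun i hi => ?_
      linear_combination (A v i) * (hrowi i hi)
    rw [Finset.sum_add_distrib, Finset.sum_sub_distrib,
      Finset.sum_congr rfl hAA, ← Finset.sum_mul, ← Finset.mul_sum, hrowv, hsm1] at hfinal
    have hzero : lam * (lam + 1) = 0 := by linear_combination -hfinal
    rcases mul_eq_zero.mp hzero with h | h
    · exact hne h
    · exact hlam1 (by linarith)

theorem stmt18 {n t : ℕ} (G : SimpleGraph (Fin n)) [DecidableRel G.Adj] (lam : ℝ)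
    (ht2 : 2 ≤ t) (hne : lam ≠ 0)
    (hmain : IsMainEig (G.adjMatrix ℝ) lam)
    (X : Finset (Fin n)) (hX : IsStarSet G lam X)
    (ht : Xᶜ.card = t)
    (hcomplete : ∀ u ∈ Xᶜ, ∀ v ∈ Xᶜ, u ≠ v → G.Adj u v) :
    (∀ v ∈ X, IsMainEig (indMatrix G (insert v Xᶜ)) lam) ∧
    alephMax G lam = n - t := by
  have key : ∀ v ∈ X, IsMainEig (indMatrix G (insert v Xᶜ)) lam :=
    fun v hv => key_main G lam ht2 hne X hX ht hcomplete v hv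
  refine ⟨key, ?_⟩
  have h1 : Xᶜ.card = n - X.card := by rw [Finset.card_compl, Fintype.card_fin]
  have h2 : X.card ≤ n := by simpa using Finset.card_le_univ X
  have hXcard : X.card = n - t := by omega
  have hmv : mainVerts G lam X = ↑X :=
    Set.ext fun w => ⟨fun h => h.1, fun h => ⟨h, key w h⟩⟩
  set P := {p : ℕ | ∃ X' : Finset (Fin n), IsStarSet G lam X' ∧ (mainVerts G lam X').ncard = p}
    with hP
  have hub : ∀ p ∈ P, p ≤ n - t := by
    rintro p ⟨X', hX', rfl⟩
    calc (mainVerts G lam X').ncard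
        ≤ (↑X' : Set (Fin n)).ncard :=
          Set.ncard_le_ncard (fun w hw => hw.1) (Set.toFinite _)
      _ = X'.card := Set.ncard_coe_finset X'
      _ = n - t := by rw [hX'.1, ← hX.1, hXcard]
  have hmem : (n - t) ∈ P := ⟨X, hX, by rw [hmv, Set.ncard_coe_finset, hXcard]⟩
  exact le_antisymm (csSup_le ⟨_, hmem⟩ hub) (le_csSup ⟨n - t, hub⟩ hmem)
end
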